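/- arXiv:2307.05169 — 11 statements merged into one kernel-verified Lean document; each statement's English description precedes it below -/
import Mathlib

section
/- Let p be an odd prime and n a positive integer. Then the unit graph G(Z_{p^n}) is connected, has p^n vertices, and has exactly (p^n - 1)·φ(p^n)/2 edges. -/
/-- The unit graph of `ZMod m`: distinct vertices `x, y` are adjacent iff `x + y` is a unit. -/
def unitGraph (m : ℕ) : SimpleGraph (ZMod m) where
  Adj x y := x ≠ y ∧ IsUnit (x + y)
  symm := by
    constructor
    intro x y h
    exact ⟨h.1.symm, by rw [add_comm]; exact h.2⟩
  loopless := by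
    constructor
    intro x h
    exact h.1 rfl

lemma zmod_isUnit_iff {p n : ℕ} (hp : p.Prime) (hn : 0 < n) (x : ZMod (p ^ n)) :
    IsUnit x ↔ ¬ p ∣ x.val := by
  haveI : NeZero (p ^ n) := ⟨pow_ne_zero n hp.pos.ne'⟩
  conv_lhs => rw [← ZMod.natCast_zmod_val x]
  rw [ZMod.isUnit_iff_coprime, Nat.coprime_pow_right_iff hn, Nat.coprime_comm,
    hp.coprime_iff_not_dvd]

theorem unitGraph_primePow_connected_card_edges (p n : ℕ) (hp : p.Prime) (hodd : Odd p)
    (hn : 0 < n) :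
    (unitGraph (p ^ n)).Connected ∧
    Nat.card (ZMod (p ^ n)) = p ^ n ∧
    (unitGraph (p ^ n)).edgeSet.ncard = (p ^ n - 1) * Nat.totient (p ^ n) / 2 := by
  classical
  haveI : NeZero (p ^ n) := ⟨pow_ne_zero n hp.pos.ne'⟩
  have hm1 : 1 < p ^ n := Nat.one_lt_pow hn.ne' hp.one_lt
  haveI : Fact (1 < p ^ n) := ⟨hm1⟩
  have h2 : IsUnit (2 : ZMod (p ^ n)) := by
    have : IsUnit ((2 : ℕ) : ZMod (p ^ n)) :=
      (ZMod.isUnit_iff_coprime 2 (p ^ n)).mpr ((hodd.coprime_two_left).pow_right n)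
    simpa using this
  -- key: non-unit plus one is a unit
  have key : ∀ v : ZMod (p ^ n), ¬ IsUnit v → IsUnit (v + 1) := by
    intro v hv
    rw [zmod_isUnit_iff hp hn] at hv ⊢
    rw [not_not] at hv
    intro hdvd
    rw [ZMod.val_add, ZMod.val_one,
      Nat.dvd_mod_iff (dvd_pow_self p hn.ne')] at hdvd
    exact hp.not_dvd_one ((Nat.dvd_add_right hv).mp hdvd)
  refine ⟨?_, by simp [Nat.card_zmod], ?_⟩
  · -- connectivity
    have H : ∀ v : ZMod (p ^ n), (unitGraph (p ^ n)).Reachable 0 v := by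
      intro v
      by_cases hv : IsUnit v
      · have hv0 : v ≠ 0 := by rintro rfl; exact not_isUnit_zero hv
        exact SimpleGraph.Adj.reachable ⟨hv0.symm, by simpa using hv⟩
      · have h01 : (unitGraph (p ^ n)).Adj 0 1 := ⟨zero_ne_one, by simp⟩
        have h1v : (unitGraph (p ^ n)).Adj 1 v :=
          ⟨fun h => hv (h ▸ isUnit_one), by rw [add_comm]; exact key v hv⟩
        exact h01.reachable.trans h1v.reachable
    exact ⟨fun u v => (H u).symm.trans (H v)⟩
  · -- edge count
    haveI : DecidableRel (unitGraph (p ^ n)).Adj := Classical.decRel _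
    set m := p ^ n with hm
    set U : Finset (ZMod m) := Finset.univ.filter (fun x => IsUnit x) with hU
    have hUcard : U.card = m.totient := by
      rw [← ZMod.card_units_eq_totient m, Fintype.card]
      symm
      apply Finset.card_bij (fun (u : (ZMod m)ˣ) _ => (u : ZMod m))
      · intro u _; simp [hU, Units.isUnit]
      · intro a _ b _ h; exact Units.ext h
      · intro b hb
        have hb' : IsUnit b := by simpa [hU] using hb
        exact ⟨hb'.unit, Finset.mem_univ _, rfl⟩
    have hA : ∀ v : ZMod m,
        (Finset.univ.filter (fun y => IsUnit (v + y))).card = U.card := by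
      intro v
      apply Finset.card_bij' (fun y _ => v + y) (fun x _ => x - v)
      · intro a ha; simpa [hU] using (Finset.mem_filter.mp ha).2
      · intro a ha
        simp only [Finset.mem_filter, Finset.mem_univ, true_and]
        rw [add_sub_cancel]
        simpa [hU] using ha
      · intro a _; ring
      · intro a _; ring
    have hdeg : ∀ v : ZMod m,
        (unitGraph m).degree v + (if IsUnit v then 1 else 0) = m.totient := by
      intro v
      have hfe : Finset.univ.filter ((unitGraph m).Adj v) =
          (Finset.univ.filter (fun y => IsUnit (v + y))).erase v := by
        ext y
        simp only [Finset.mem_filter, Finset.mem_univ, true_and, Finset.mem_erase]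
        constructor
        · rintro ⟨h1, h2⟩; exact ⟨Ne.symm h1, h2⟩
        · rintro ⟨h1, h2⟩; exact ⟨Ne.symm h1, h2⟩
      have hmem : v ∈ Finset.univ.filter (fun y => IsUnit (v + y)) ↔ IsUnit v := by
        simp only [Finset.mem_filter, Finset.mem_univ, true_and]
        rw [← two_mul, IsUnit.mul_iff]
        exact ⟨fun h => h.2, fun h => ⟨h2, h⟩⟩
      rw [SimpleGraph.degree, SimpleGraph.neighborFinset_eq_filter, hfe]
      by_cases hv : IsUnit v
      · rw [if_pos hv, Finset.card_erase_of_mem (hmem.mpr hv),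
          Nat.sub_add_cancel (Finset.card_pos.mpr ⟨v, hmem.mpr hv⟩), hA, hUcard]
      · rw [if_neg hv, Finset.erase_eq_of_notMem (fun h => hv (hmem.mp h)),
          add_zero, hA, hUcard]
    have hsumite : (∑ v : ZMod m, if IsUnit v then 1 else 0) = U.card := by
      simp [hU, Finset.sum_boole]
    have hsum : 2 * (unitGraph m).edgeFinset.card + m.totient = m * m.totient := by
      calc 2 * (unitGraph m).edgeFinset.card + m.totient
          = (∑ v, (unitGraph m).degree v) + ∑ v : ZMod m, (if IsUnit v then 1 else 0) := by
            rw [SimpleGraph.sum_degrees_eq_twice_card_edges, hsumite, hUcard]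
        _ = ∑ v : ZMod m, ((unitGraph m).degree v + if IsUnit v then 1 else 0) :=
            (Finset.sum_add_distrib).symm
        _ = ∑ _v : ZMod m, m.totient := Finset.sum_congr rfl (fun v _ => hdeg v)
        _ = m * m.totient := by
            rw [Finset.sum_const, Finset.card_univ, ZMod.card, smul_eq_mul]
    have hncard : (unitGraph m).edgeSet.ncard = (unitGraph m).edgeFinset.card := by
      rw [Set.ncard_eq_toFinset_card']
      exact congrArg Finset.card
        (Set.toFinset_congr rfl : (unitGraph m).edgeSet.toFinset = (unitGraph m).edgeFinset)
    have hsub : (m - 1) * m.totient = m * m.totient - m.totient := by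
      rw [Nat.sub_mul, one_mul]
    rw [hncard, hsub]
    omega
end

section
/- Let p be an odd prime and n a positive integer. Then the edge connectivity of the unit graph G(Z_{p^n}) equals φ(p^n) - 1; that is, there exists a set of φ(p^n) - 1 edges of G(Z_{p^n}) whose deletion leaves a graph that is not connected, while deleting any set of fewer than φ(p^n) - 1 edges leaves a connected graph. -/
namespace UnitGraphAux

open Finset SimpleGraph

variable {p n : ℕ}

lemma isUnit_iff_not_dvd (hp : p.Prime) (hn : 0 < n) (x : ZMod (p ^ n)) :
    IsUnit x ↔ ¬ p ∣ x.val := by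
  haveI : NeZero (p ^ n) := ⟨pow_ne_zero n hp.pos.ne'⟩
  have h1 : IsUnit x ↔ IsUnit ((x.val : ℕ) : ZMod (p ^ n)) := by
    rw [ZMod.natCast_zmod_val]
  rw [h1, ZMod.isUnit_iff_coprime, Nat.coprime_pow_right_iff hn, Nat.coprime_comm,
    hp.coprime_iff_not_dvd]

lemma isUnit_iff_cast (hp : p.Prime) (hn : 0 < n) (x : ZMod (p ^ n)) :
    IsUnit x ↔ (ZMod.castHom (dvd_pow_self p hn.ne') (ZMod p)) x ≠ 0 := by
  haveI : NeZero (p ^ n) := ⟨pow_ne_zero n hp.pos.ne'⟩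
  rw [isUnit_iff_not_dvd hp hn, ZMod.castHom_apply, ← ZMod.natCast_val, Ne,
    ZMod.natCast_eq_zero_iff]

lemma add_nonunit (hp : p.Prime) (hn : 0 < n) {x : ZMod (p ^ n)} (hx : ¬ IsUnit x)
    (w : ZMod (p ^ n)) : IsUnit (w + x) ↔ IsUnit w := by
  have hx0 : (ZMod.castHom (dvd_pow_self p hn.ne') (ZMod p)) x = 0 := by
    by_contra h
    exact hx ((isUnit_iff_cast hp hn x).mpr h)
  rw [isUnit_iff_cast hp hn, isUnit_iff_cast hp hn w, map_add, hx0, add_zero]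

lemma two_unit (hp : p.Prime) (hodd : Odd p) (hn : 0 < n) : IsUnit (2 : ZMod (p ^ n)) := by
  have h2 : ((2 : ℕ) : ZMod (p ^ n)) = (2 : ZMod (p ^ n)) := by norm_cast
  rw [← h2, ZMod.isUnit_iff_coprime, Nat.coprime_pow_right_iff hn]
  exact hodd.coprime_two_left

lemma card_units_filter (m : ℕ) [NeZero m] [DecidablePred (IsUnit : ZMod m → Prop)] :
    (Finset.univ.filter (fun x : ZMod m => IsUnit x)).card = m.totient := by
  rw [← ZMod.card_units_eq_totient, ← Finset.card_univ]
  refine (Finset.card_bij (fun (u : (ZMod m)ˣ) _ => (u : ZMod m)) ?_ ?_ ?_).symm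
  · intro u _
    simp only [mem_filter, mem_univ, true_and]
    exact u.isUnit
  · intro a _ b _ hab
    exact Units.ext hab
  · intro b hb
    simp only [mem_filter, mem_univ, true_and] at hb
    obtain ⟨u, hu⟩ := hb
    exact ⟨u, mem_univ u, hu⟩

lemma card_shift (hp : p.Prime) (hn : 0 < n) (x : ZMod (p ^ n)) [NeZero (p ^ n)]
    [DecidablePred (IsUnit : ZMod (p ^ n) → Prop)] [DecidableEq (ZMod (p ^ n))] :
    (Finset.univ.filter (fun w : ZMod (p ^ n) => IsUnit (x + w))).card
      = (p ^ n).totient := by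
  haveI : NeZero (p ^ n) := ⟨pow_ne_zero n hp.pos.ne'⟩
  rw [← card_units_filter (p ^ n)]
  refine Finset.card_bij (fun w _ => x + w) ?_ ?_ ?_
  · intro w hw
    simp only [mem_filter, mem_univ, true_and] at hw ⊢
    exact hw
  · intro a _ b _ hab
    exact add_left_cancel hab
  · intro u hu
    simp only [mem_filter, mem_univ, true_and] at hu
    exact ⟨u - x, by simp [mem_filter, add_sub_cancel, hu], by ring⟩

/-- For a unit `x`, the number of neighbors in the unit graph is `totient - 1`. -/
lemma card_nbrs (hp : p.Prime) (hodd : Odd p) (hn : 0 < n) {x : ZMod (p ^ n)} (hx : IsUnit x)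
    [NeZero (p ^ n)] [DecidablePred (IsUnit : ZMod (p ^ n) → Prop)] [DecidableEq (ZMod (p ^ n))] :
    (Finset.univ.filter (fun w : ZMod (p ^ n) => w ≠ x ∧ IsUnit (x + w))).card + 1
      = (p ^ n).totient := by
  have hA : (Finset.univ.filter (fun w : ZMod (p ^ n) => w ≠ x ∧ IsUnit (x + w)))
      = (Finset.univ.filter (fun w : ZMod (p ^ n) => IsUnit (x + w))).erase x := by
    ext w
    simp only [mem_filter, mem_univ, true_and, mem_erase]
  have hxA : x ∈ (Finset.univ.filter (fun w : ZMod (p ^ n) => IsUnit (x + w))) := by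
    simp only [mem_filter, mem_univ, true_and]
    have : x + x = 2 * x := by ring
    rw [this]
    exact (two_unit hp hodd hn).mul hx
  rw [hA, Finset.card_erase_add_one hxA, card_shift hp hn]

lemma totient_ge_two (hp : p.Prime) (hodd : Odd p) (hn : 0 < n) :
    2 ≤ (p ^ n).totient := by
  rw [Nat.totient_prime_pow hp hn]
  have hp3 : 3 ≤ p := by
    have h2 := hp.two_le
    have hne : p ≠ 2 := by rintro rfl; rw [Nat.odd_iff] at hodd; omega
    omega
  have h1 : 1 ≤ p ^ (n - 1) := Nat.one_le_pow _ _ hp.pos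
  have h2 : 2 ≤ p - 1 := by omega
  calc 2 = 1 * 2 := by omega
    _ ≤ p ^ (n - 1) * (p - 1) := Nat.mul_le_mul h1 h2

/-- Main connectivity lemma: deleting at most `totient - 2` edges keeps the graph connected. -/
lemma connected_del (hp : p.Prime) (hodd : Odd p) (hn : 0 < n)
    (S : Finset (Sym2 (ZMod (p ^ n)))) (hcard : S.card + 2 ≤ (p ^ n).totient) :
    ((unitGraph (p ^ n)).deleteEdges ↑S).Connected := by
  classical
  haveI : NeZero (p ^ n) := ⟨pow_ne_zero n hp.pos.ne'⟩
  haveI : Fact (1 < p ^ n) := ⟨Nat.one_lt_pow hn.ne' hp.one_lt⟩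
  set G := unitGraph (p ^ n) with hG
  set φ := (p ^ n).totient with hφ
  have hGadj : ∀ a b : ZMod (p ^ n), G.Adj a b ↔ a ≠ b ∧ IsUnit (a + b) := fun _ _ => Iff.rfl
  have unit_ne_zero : ∀ {w : ZMod (p ^ n)}, IsUnit w → w ≠ 0 := by
    rintro w hw rfl
    exact not_isUnit_zero hw
  set U := Finset.univ.filter (fun x : ZMod (p ^ n) => IsUnit x) with hU
  have hUcard : U.card = φ := card_units_filter (p ^ n)
  -- Claim A : every nonunit is reachable to 0
  have claimA : ∀ z : ZMod (p ^ n), ¬ IsUnit z → (G.deleteEdges ↑S).Reachable z 0 := by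
    intro z hz
    rcases eq_or_ne z 0 with rfl | hz0
    · exact Reachable.refl 0
    set Bad := U.filter (fun w => s(z, w) ∈ S ∨ s(w, 0) ∈ S) with hBad
    have hBadcard : Bad.card ≤ S.card := by
      apply Finset.card_le_card_of_injOn (fun w => if s(z, w) ∈ S then s(z, w) else s(w, 0))
      · intro w hw
        simp only [hBad, Finset.mem_coe, mem_filter] at hw
        simp only [Finset.mem_coe]
        split_ifs with h
        · exact h
        · tauto
      · intro a ha b hb hab
        simp only at hab
        simp only [Finset.coe_filter, Set.mem_setOf_eq, hBad, hU, mem_filter, mem_univ,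
          true_and] at ha hb
        split_ifs at hab with h1 h2 h2
        · exact Sym2.congr_right.mp hab
        · rw [Sym2.eq_iff] at hab
          rcases hab with ⟨h3, h4⟩ | ⟨h3, h4⟩
          · exact absurd (h3 ▸ hb.1) hz
          · exact absurd h3 hz0
        · rw [Sym2.eq_iff] at hab
          rcases hab with ⟨h3, h4⟩ | ⟨h3, h4⟩
          · exact absurd (h3 ▸ ha.1) hz
          · exact absurd h4.symm hz0
        · rw [Sym2.eq_iff] at hab
          rcases hab with ⟨h3, h4⟩ | ⟨h3, h4⟩
          · exact h3
          · exact h3.trans h4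
    have hlt : Bad.card < U.card := by omega
    obtain ⟨w, hwU, hwB⟩ : ∃ w ∈ U, w ∉ Bad := by
      by_contra h
      push_neg at h
      exact absurd (Finset.card_le_card h) (not_le.mpr hlt)
    simp only [hU, mem_filter, mem_univ, true_and] at hwU
    simp only [hBad, mem_filter, not_and, not_or] at hwB
    have hwB' := hwB (by simp [hU, hwU])
    have hadj1 : (G.deleteEdges ↑S).Adj z w := by
      rw [SimpleGraph.deleteEdges_adj]
      refine ⟨(hGadj z w).mpr ⟨?_, ?_⟩, by simpa using hwB'.1⟩
      · rintro rfl; exact hz hwU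
      · rw [add_comm]; exact (add_nonunit hp hn hz w).mpr hwU
    have hadj2 : (G.deleteEdges ↑S).Adj w 0 := by
      rw [SimpleGraph.deleteEdges_adj]
      refine ⟨(hGadj w 0).mpr ⟨unit_ne_zero hwU, by rwa [add_zero]⟩, by simpa using hwB'.2⟩
    exact hadj1.reachable.trans hadj2.reachable
  -- Claim B : every unit is reachable to 0
  have claimB : ∀ x : ZMod (p ^ n), IsUnit x → (G.deleteEdges ↑S).Reachable x 0 := by
    intro x hx
    have hx0 : x ≠ 0 := unit_ne_zero hx
    set N := Finset.univ.filter (fun w : ZMod (p ^ n) => w ≠ x ∧ IsUnit (x + w)) with hN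
    have hNcard : N.card + 1 = φ := card_nbrs hp hodd hn hx
    set Bad := N.filter (fun w => s(x, w) ∈ S ∨ (IsUnit w ∧ s(w, 0) ∈ S)) with hBad
    have hBadcard : Bad.card ≤ S.card := by
      apply Finset.card_le_card_of_injOn (fun w => if s(x, w) ∈ S then s(x, w) else s(w, 0))
      · intro w hw
        simp only [hBad, Finset.mem_coe, mem_filter] at hw
        simp only [Finset.mem_coe]
        split_ifs with h
        · exact h
        · tauto
      · intro a ha b hb hab
        simp only at hab
        simp only [Finset.coe_filter, Set.mem_setOf_eq, hBad, hN, mem_filter, mem_univ,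
          true_and] at ha hb
        split_ifs at hab with h1 h2 h2
        · exact Sym2.congr_right.mp hab
        · rw [Sym2.eq_iff] at hab
          rcases hab with ⟨h3, h4⟩ | ⟨h3, h4⟩
          · exact absurd h3.symm hb.1.1
          · exact absurd h3 hx0
        · rw [Sym2.eq_iff] at hab
          rcases hab with ⟨h3, h4⟩ | ⟨h3, h4⟩
          · exact absurd h3 ha.1.1
          · exact absurd h4.symm hx0
        · rw [Sym2.eq_iff] at hab
          rcases hab with ⟨h3, h4⟩ | ⟨h3, h4⟩
          · exact h3
          · exact h3.trans h4
    have hlt : Bad.card < N.card := by omega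
    obtain ⟨w, hwN, hwB⟩ : ∃ w ∈ N, w ∉ Bad := by
      by_contra h
      push_neg at h
      exact absurd (Finset.card_le_card h) (not_le.mpr hlt)
    have hwN' := hwN
    simp only [hN, mem_filter, mem_univ, true_and] at hwN'
    simp only [hBad, mem_filter, not_and, not_or] at hwB
    have hwB' := hwB hwN
    have hadj1 : (G.deleteEdges ↑S).Adj x w := by
      rw [SimpleGraph.deleteEdges_adj]
      exact ⟨(hGadj x w).mpr ⟨Ne.symm hwN'.1, hwN'.2⟩, by simpa using hwB'.1⟩
    by_cases hwunit : IsUnit w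
    · have hadj2 : (G.deleteEdges ↑S).Adj w 0 := by
        rw [SimpleGraph.deleteEdges_adj]
        refine ⟨(hGadj w 0).mpr ⟨unit_ne_zero hwunit, by rwa [add_zero]⟩, ?_⟩
        simpa using hwB'.2 hwunit
      exact hadj1.reachable.trans hadj2.reachable
    · exact hadj1.reachable.trans (claimA w hwunit)
  rw [SimpleGraph.connected_iff]
  refine ⟨?_, ⟨0⟩⟩
  intro a b
  have ra : (G.deleteEdges ↑S).Reachable a 0 := by
    by_cases h : IsUnit a
    · exact claimB a h
    · exact claimA a h
  have rb : (G.deleteEdges ↑S).Reachable b 0 := by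
    by_cases h : IsUnit b
    · exact claimB b h
    · exact claimA b h
  exact ra.trans rb.symm

end UnitGraphAux

open UnitGraphAux Finset SimpleGraph in
theorem unitGraph_primePow_edgeConnectivity (p n : ℕ) (hp : p.Prime) (hodd : Odd p)
    (hn : 0 < n) :
    (∃ S : Finset (Sym2 (ZMod (p ^ n))), ↑S ⊆ (unitGraph (p ^ n)).edgeSet ∧
        S.card = Nat.totient (p ^ n) - 1 ∧ ¬((unitGraph (p ^ n)).deleteEdges ↑S).Connected) ∧
    (∀ S : Finset (Sym2 (ZMod (p ^ n))), ↑S ⊆ (unitGraph (p ^ n)).edgeSet →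
        S.card < Nat.totient (p ^ n) - 1 → ((unitGraph (p ^ n)).deleteEdges ↑S).Connected) := by
  classical
  haveI : NeZero (p ^ n) := ⟨pow_ne_zero n hp.pos.ne'⟩
  haveI : Fact (1 < p ^ n) := ⟨Nat.one_lt_pow hn.ne' hp.one_lt⟩
  set G := unitGraph (p ^ n) with hG
  constructor
  · -- upper bound : delete all edges at the unit vertex 1
    refine ⟨G.incidenceFinset 1, ?_, ?_, ?_⟩
    · intro e he
      rw [Finset.mem_coe, SimpleGraph.mem_incidenceFinset] at he
      exact G.incidenceSet_subset 1 he
    · rw [SimpleGraph.card_incidenceFinset_eq_degree]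
      have hnbr : G.neighborFinset 1
          = Finset.univ.filter (fun w : ZMod (p ^ n) => w ≠ 1 ∧ IsUnit (1 + w)) := by
        ext w
        simp only [SimpleGraph.mem_neighborFinset, mem_filter, mem_univ, true_and]
        constructor
        · intro h
          exact ⟨(h.1 : (1 : ZMod (p ^ n)) ≠ w).symm, h.2⟩
        · intro h
          exact ⟨h.1.symm, h.2⟩
      have hcard := card_nbrs hp hodd hn (x := (1 : ZMod (p ^ n))) isUnit_one
      rw [SimpleGraph.degree, hnbr]
      omega
    · intro hconn
      obtain ⟨W⟩ := hconn.preconnected 1 0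
      have hne : (1 : ZMod (p ^ n)) ≠ 0 := one_ne_zero
      have hnil : ¬ W.Nil := SimpleGraph.Walk.not_nil_of_ne hne
      obtain ⟨y, h, q, rfl⟩ := SimpleGraph.Walk.not_nil_iff.mp hnil
      rw [SimpleGraph.deleteEdges_adj] at h
      refine h.2 ?_
      rw [Finset.mem_coe, SimpleGraph.mem_incidenceFinset]
      exact ⟨(G.mem_edgeSet).mpr h.1, Sym2.mem_mk_left _ _⟩
  · -- lower bound
    intro S _ hScard
    have h2 : 2 ≤ (p ^ n).totient := totient_ge_two hp hodd hn
    exact connected_del hp hodd hn S (by omega)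
end

section
/- Let p be an odd prime and n a positive integer with p^n ≠ 3. Then the girth of the unit graph G(Z_{p^n}) equals 3. -/
namespace SimpleGraph

theorem girth_eq_three_of_adj {α : Type*} {G : SimpleGraph α} {a b c : α}
    (hab : G.Adj a b) (hbc : G.Adj b c) (hca : G.Adj c a) : G.girth = 3 := by
  have hcyc : (Walk.cons hab (Walk.cons hbc (Walk.cons hca Walk.nil))).IsCycle := by
    simp [Walk.isCycle_def, hab.ne, hbc.ne, hca.ne, hab.ne', hca.ne']
  exact le_antisymm (girth_le_length hcyc) (three_le_girth fun hG => hG _ hcyc)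

end SimpleGraph

theorem unitGraph_girth_eq_three_of_isUnit {m : ℕ} {u : ZMod m} (hu0 : u ≠ 0) (hu1 : u ≠ 1)
    (hu : IsUnit u) (hu_succ : IsUnit (u + 1)) : (unitGraph m).girth = 3 := by
  have : Nontrivial (ZMod m) := nontrivial_of_ne u 0 hu0
  refine SimpleGraph.girth_eq_three_of_adj (a := 0) (b := 1) (c := u) ⟨zero_ne_one, ?_⟩
    ⟨hu1.symm, ?_⟩ ⟨hu0, ?_⟩
  · simp
  · rwa [add_comm]
  · rwa [add_zero]

theorem unitGraph_girth_eq_three_of_coprime {m k : ℕ} (hk : 2 ≤ k) (hkm : k < m)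
    (hcop : k.Coprime m) (hcop_succ : (k + 1).Coprime m) : (unitGraph m).girth = 3 := by
  refine unitGraph_girth_eq_three_of_isUnit (u := k) ?_ ?_ ((ZMod.isUnit_iff_coprime k m).2 hcop)
    (by exact_mod_cast (ZMod.isUnit_iff_coprime _ m).2 hcop_succ)
  · rw [Ne, ZMod.natCast_eq_zero_iff]
    exact Nat.not_dvd_of_pos_of_lt (by omega) hkm
  · rw [Ne, ← Nat.cast_one, ZMod.natCast_eq_natCast_iff', Nat.mod_eq_of_lt hkm,
      Nat.mod_eq_of_lt (by omega)]
    omega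

theorem unitGraph_primePow_girth (p n : ℕ) (hp : p.Prime) (hodd : Odd p) (hn : 0 < n)
    (h3 : p ^ n ≠ 3) :
    (unitGraph (p ^ n)).girth = 3 := by
  by_cases hp3 : p = 3
  · subst hp3
    have hn2 : 2 ≤ n := by
      by_contra! h
      exact h3 (by rw [show n = 1 by omega, pow_one])
    have h9 : 3 ^ 2 ≤ 3 ^ n := Nat.pow_le_pow_right (by norm_num) hn2
    exact unitGraph_girth_eq_three_of_coprime (k := 4) le_add_self (by omega)
      (hp.coprime_pow_of_not_dvd (by norm_num)) (hp.coprime_pow_of_not_dvd (by norm_num))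
  · have hp5 : 5 ≤ p := by
      have := hp.two_le
      rcases hodd with ⟨j, rfl⟩
      omega
    have hp_not_dvd : ∀ k, 0 < k → k < 5 → ¬p ∣ k := fun k hk0 hk5 hdvd =>
      absurd (Nat.le_of_dvd hk0 hdvd) (by omega)
    exact unitGraph_girth_eq_three_of_coprime (k := 2) le_rfl
      (by have := Nat.le_self_pow hn.ne' p; omega)
      (hp.coprime_pow_of_not_dvd (hp_not_dvd 2 two_pos (by norm_num)))
      (hp.coprime_pow_of_not_dvd (hp_not_dvd 3 three_pos (by norm_num)))
end

section
/- Let n be a positive integer. Then the unit graph G(Z_{2^n}) has 2^n vertices and exactly 2^{2(n-1)} edges, and its edge connectivity equals 2^{n-1}; that is, there exists a set of 2^{n-1} edges whose deletion leaves a graph that is not connected, while deleting any set of fewer than 2^{n-1} edges leaves a connected graph. -/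
namespace UnitGraphAux

open Finset

/-- Reduction mod 2. -/
noncomputable def pr (k : ℕ) : ZMod (2 ^ (k+1)) →+* ZMod 2 :=
  ZMod.castHom (dvd_pow_self 2 (Nat.succ_ne_zero k)) (ZMod 2)

lemma z2 : ∀ b : ZMod 2, b = 1 ↔ ¬ b = 0 := by decide
lemma z2add : ∀ a : ZMod 2, a + 1 ≠ a := by decide
lemma z2add' : ∀ a : ZMod 2, a + 1 + 1 = a := by decide

lemma unit_iff (k : ℕ) (x : ZMod (2 ^ (k+1))) : IsUnit x ↔ pr k x = 1 := by
  have hv : pr k x = ((x.val : ℕ) : ZMod 2) := by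
    conv_lhs => rw [← ZMod.natCast_zmod_val x]
    rw [map_natCast]
  have hd : pr k x = 1 ↔ ¬ (2 ∣ x.val) := by
    rw [hv, z2, ZMod.natCast_eq_zero_iff]
  rw [hd]
  conv_lhs => rw [← ZMod.natCast_zmod_val x]
  rw [ZMod.isUnit_iff_coprime, Nat.coprime_pow_right_iff (Nat.succ_pos k)]
  exact ⟨fun h => (Nat.Prime.coprime_iff_not_dvd Nat.prime_two).mp h.symm,
    fun h => ((Nat.Prime.coprime_iff_not_dvd Nat.prime_two).mpr h).symm⟩

lemma adj_iff (k : ℕ) (x y : ZMod (2 ^ (k+1))) :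
    (unitGraph (2 ^ (k+1))).Adj x y ↔ pr k y = pr k x + 1 := by
  constructor
  · rintro ⟨-, hu⟩
    have := (unit_iff k _).mp hu
    rw [map_add] at this
    revert this
    generalize pr k x = a; generalize pr k y = b
    revert a b; decide
  · intro h
    refine ⟨fun he => ?_, (unit_iff k _).mpr ?_⟩
    · rw [he] at h
      revert h; generalize pr k y = a; revert a; decide
    · rw [map_add, h]
      generalize pr k x = a; revert a; decide

lemma fiber_card (k : ℕ) (a : ZMod 2) :
    (Finset.univ.filter (fun x : ZMod (2 ^ (k+1)) => pr k x = a)).card = 2 ^ k := by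
  classical
  have hcardtot : Fintype.card (ZMod (2 ^ (k+1))) = 2 ^ (k+1) := ZMod.card _
  have hbij : (Finset.univ.filter (fun x : ZMod (2 ^ (k+1)) => pr k x = 0)).card
      = (Finset.univ.filter (fun x : ZMod (2 ^ (k+1)) => pr k x = 1)).card := by
    refine Finset.card_bij' (fun x _ => x + 1) (fun y _ => y - 1) ?_ ?_ ?_ ?_
    · intro x hx
      simp only [mem_filter, mem_univ, true_and] at hx ⊢
      rw [map_add, map_one, hx]; decide
    · intro y hy
      simp only [mem_filter, mem_univ, true_and] at hy ⊢
      rw [map_sub, map_one, hy]; decide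
    · intro x _; ring
    · intro y _; ring
  have hfe : (Finset.univ.filter (fun x : ZMod (2 ^ (k+1)) => ¬ pr k x = 0))
      = (Finset.univ.filter (fun x : ZMod (2 ^ (k+1)) => pr k x = 1)) := by
    apply Finset.filter_congr
    intro x _
    constructor
    · generalize pr k x = b; revert b; decide
    · intro h; rw [h]; decide
  have hsum := Finset.card_filter_add_card_filter_not
    (s := (Finset.univ : Finset (ZMod (2 ^ (k+1))))) (p := fun x => pr k x = 0)
  rw [hfe, Finset.card_univ, hcardtot] at hsum
  have h0 : (Finset.univ.filter (fun x : ZMod (2 ^ (k+1)) => pr k x = 0)).card = 2 ^ k := by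
    rw [hbij] at hsum
    have : 2 ^ (k+1) = 2 ^ k + 2 ^ k := by ring
    omega
  have hor : a = 0 ∨ a = 1 := by revert a; decide
  rcases hor with rfl | rfl
  · exact h0
  · rw [← hbij]; exact h0

lemma degree_eq (k : ℕ) [DecidableRel (unitGraph (2 ^ (k+1))).Adj]
    (x : ZMod (2 ^ (k+1))) : (unitGraph (2 ^ (k+1))).degree x = 2 ^ k := by
  classical
  show ((unitGraph (2 ^ (k+1))).neighborFinset x).card = 2 ^ k
  have hnb : (unitGraph (2 ^ (k+1))).neighborFinset x
      = Finset.univ.filter (fun y => pr k y = pr k x + 1) := by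
    ext y
    simp only [SimpleGraph.mem_neighborFinset, mem_filter, mem_univ, true_and]
    exact adj_iff k x y
  rw [hnb]
  exact fiber_card k _

lemma edge_count (k : ℕ) : (unitGraph (2 ^ (k+1))).edgeSet.ncard = 2 ^ (2 * k) := by
  classical
  have hsum := SimpleGraph.sum_degrees_eq_twice_card_edges (unitGraph (2 ^ (k+1)))
  rw [Finset.sum_congr rfl (fun x _ => degree_eq k x), Finset.sum_const, Finset.card_univ,
    ZMod.card, smul_eq_mul] at hsum
  have hE : (unitGraph (2 ^ (k+1))).edgeFinset.card = 2 ^ (2 * k) := by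
    have h2 : 2 ^ (k+1) * 2 ^ k = 2 * 2 ^ (2 * k) := by ring
    omega
  rw [Set.ncard_eq_toFinset_card']
  exact hE

lemma exists_adj_of_reachable {V : Type*} {G : SimpleGraph V} {u v : V} (h : u ≠ v)
    (r : G.Reachable u v) : ∃ y, G.Adj u y := by
  obtain ⟨w⟩ := r
  cases w with
  | nil => exact absurd rfl h
  | cons h' _ => exact ⟨_, h'⟩

lemma disconnect (k : ℕ) :
    ∃ S : Finset (Sym2 (ZMod (2 ^ (k+1)))), ↑S ⊆ (unitGraph (2 ^ (k+1))).edgeSet ∧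
      S.card = 2 ^ k ∧ ¬((unitGraph (2 ^ (k+1))).deleteEdges ↑S).Connected := by
  classical
  refine ⟨(unitGraph (2 ^ (k+1))).incidenceFinset 0, ?_, ?_, ?_⟩
  · intro e he
    rw [Finset.mem_coe, SimpleGraph.mem_incidenceFinset] at he
    exact he.1
  · rw [SimpleGraph.card_incidenceFinset_eq_degree]
    exact degree_eq k 0
  · intro hc
    haveI : Fact (1 < 2 ^ (k+1)) := ⟨Nat.one_lt_two_pow_iff.mpr (Nat.succ_ne_zero k)⟩
    have h01 : (0 : ZMod (2 ^ (k+1))) ≠ 1 := zero_ne_one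
    obtain ⟨y, hy⟩ := exists_adj_of_reachable h01 (hc.preconnected 0 1)
    rw [SimpleGraph.deleteEdges_adj] at hy
    refine hy.2 ?_
    rw [Finset.mem_coe, SimpleGraph.mem_incidenceFinset]
    exact (unitGraph (2 ^ (k+1))).mk'_mem_incidenceSet_left_iff.mpr hy.1

/-- Same parity vertices are reachable after deleting fewer than `2^k` edges. -/
lemma reach_same (k : ℕ) (S : Finset (Sym2 (ZMod (2 ^ (k+1))))) (hS : S.card < 2 ^ k)
    (x y : ZMod (2 ^ (k+1))) (hpar : pr k x = pr k y) :
    ((unitGraph (2 ^ (k+1))).deleteEdges ↑S).Reachable x y := by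
  classical
  by_cases hxy : x = y
  · exact hxy ▸ SimpleGraph.Reachable.refl x
  have hex : ∃ z, pr k z = pr k x + 1 ∧ s(x, z) ∉ S ∧ s(z, y) ∉ S := by
    by_contra hcon
    push_neg at hcon
    have hle : (Finset.univ.filter (fun z : ZMod (2 ^ (k+1)) => pr k z = pr k x + 1)).card
        ≤ S.card := by
      apply Finset.card_le_card_of_injOn (fun z => if s(x, z) ∈ S then s(x, z) else s(z, y))
      · intro z hz
        simp only [coe_filter, mem_filter, Set.mem_setOf_eq, mem_univ, true_and] at hz
        by_cases h1 : s(x, z) ∈ S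
        · simp [h1]
        · simp only [h1, if_false]
          exact hcon z hz h1
      · intro z1 h1 z2 h2 heq
        simp only [coe_filter, Set.mem_setOf_eq, mem_univ, true_and] at h1 h2
        have hz1x : z1 ≠ x := fun h => z2add (pr k x) ((h ▸ h1).symm)
        have hz2x : z2 ≠ x := fun h => z2add (pr k x) ((h ▸ h2).symm)
        have hz1y : z1 ≠ y := fun h => z2add (pr k x) (by rw [← h1, h, ← hpar])
        have hz2y : z2 ≠ y := fun h => z2add (pr k x) (by rw [← h2, h, ← hpar])
        have hxy' : x ≠ y := hxy
        dsimp only at heq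
        split_ifs at heq with ha hb hb <;> rw [Sym2.eq_iff] at heq <;>
          rcases heq with ⟨e1, e2⟩ | ⟨e1, e2⟩
        · exact e2
        · exact absurd e1.symm hz2x
        · exact absurd e1.symm hz2x
        · exact absurd e1 hxy'
        · exact absurd e1 hz1x
        · exact e1
        · exact e1
        · exact absurd e1 hz1y
    rw [fiber_card] at hle
    omega
  obtain ⟨z, hz, h1, h2⟩ := hex
  have hax : ((unitGraph (2 ^ (k+1))).deleteEdges ↑S).Adj x z := by
    rw [SimpleGraph.deleteEdges_adj]
    exact ⟨(adj_iff k x z).mpr hz, by simpa using h1⟩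
  have hay : ((unitGraph (2 ^ (k+1))).deleteEdges ↑S).Adj z y := by
    rw [SimpleGraph.deleteEdges_adj]
    refine ⟨(adj_iff k z y).mpr ?_, by simpa using h2⟩
    rw [hz, ← hpar, z2add']
  exact hax.reachable.trans hay.reachable

lemma lower (k : ℕ) (S : Finset (Sym2 (ZMod (2 ^ (k+1))))) (hS : S.card < 2 ^ k) :
    ((unitGraph (2 ^ (k+1))).deleteEdges ↑S).Connected := by
  classical
  rw [SimpleGraph.connected_iff]
  refine ⟨fun x y => ?_, inferInstance⟩
  by_cases hpar : pr k x = pr k y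
  · exact reach_same k S hS x y hpar
  · have hq : pr k y = pr k x + 1 := by
      revert hpar
      generalize pr k x = a; generalize pr k y = b
      revert a b; decide
    have hex : ∃ z, pr k z = pr k x + 1 ∧ s(x, z) ∉ S := by
      by_contra hcon
      push_neg at hcon
      have hle : (Finset.univ.filter (fun z : ZMod (2 ^ (k+1)) => pr k z = pr k x + 1)).card
          ≤ S.card := by
        apply Finset.card_le_card_of_injOn (fun z => s(x, z))
        · intro z hz
          simp only [coe_filter, mem_filter, Set.mem_setOf_eq, mem_univ, true_and] at hz
          exact hcon z hz
        · intro z1 h1 z2 h2 heq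
          simp only [coe_filter, Set.mem_setOf_eq, mem_univ, true_and] at h1 h2
          have hz2x : z2 ≠ x := fun h => z2add (pr k x) ((h ▸ h2).symm)
          dsimp only at heq
          rw [Sym2.eq_iff] at heq
          rcases heq with ⟨e1, e2⟩ | ⟨e1, e2⟩
          · exact e2
          · exact absurd e1.symm hz2x
      rw [fiber_card] at hle
      omega
    obtain ⟨z, hz, h1⟩ := hex
    have hax : ((unitGraph (2 ^ (k+1))).deleteEdges ↑S).Adj x z := by
      rw [SimpleGraph.deleteEdges_adj]
      exact ⟨(adj_iff k x z).mpr hz, by simpa using h1⟩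
    exact hax.reachable.trans (reach_same k S hS z y (by rw [hz, hq]))

end UnitGraphAux

theorem unitGraph_twoPow_card_edges_edgeConnectivity (n : ℕ) (hn : 0 < n) :
    Nat.card (ZMod (2 ^ n)) = 2 ^ n ∧
    (unitGraph (2 ^ n)).edgeSet.ncard = 2 ^ (2 * (n - 1)) ∧
    ((∃ S : Finset (Sym2 (ZMod (2 ^ n))), ↑S ⊆ (unitGraph (2 ^ n)).edgeSet ∧
         S.card = 2 ^ (n - 1) ∧ ¬((unitGraph (2 ^ n)).deleteEdges ↑S).Connected) ∧
     (∀ S : Finset (Sym2 (ZMod (2 ^ n))), ↑S ⊆ (unitGraph (2 ^ n)).edgeSet →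
         S.card < 2 ^ (n - 1) → ((unitGraph (2 ^ n)).deleteEdges ↑S).Connected)) := by
  obtain ⟨k, rfl⟩ : ∃ k, n = k + 1 := ⟨n - 1, (Nat.succ_pred_eq_of_pos hn).symm⟩
  have hk : k + 1 - 1 = k := rfl
  rw [hk]
  refine ⟨Nat.card_zmod _, UnitGraphAux.edge_count k, UnitGraphAux.disconnect k,
    fun S _ hS => UnitGraphAux.lower k S hS⟩
end

section
/- Let p be an odd prime and n a positive integer, and let H be the incidence matrix of the unit graph G(Z_{p^n}) over the field F_2. Then the binary code C generated by the rows of H has length (p^n - 1)·φ(p^n)/2 (the number of edges of G(Z_{p^n})), dimension p^n - 1 over F_2, and minimum distance φ(p^n) - 1: every nonzero codeword of C has Hamming weight at least φ(p^n) - 1, and some codeword has Hamming weight exactly φ(p^n) - 1. -/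
open Classical in
/-- The linear code generated by the rows of the incidence matrix of `G` over `F`,
    viewed inside `F^E` where `E` is the edge set of `G`. -/
noncomputable def graphCode (F : Type*) [Field F] {V : Type*} (G : SimpleGraph V) :
    Submodule F (↥G.edgeSet → F) :=
  Submodule.span F (Set.range fun v : V => fun e : G.edgeSet => G.incMatrix F v ↑e)

open Finset

section Aux
variable {m : ℕ} [NeZero m]

open scoped Classical

/-- number of units -/
lemma card_filter_isUnit : (univ.filter fun x : ZMod m => IsUnit x).card = Nat.totient m := by
  rw [← ZMod.card_units_eq_totient]
  rw [← Fintype.card_subtype]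
  exact Fintype.card_congr
    { toFun := fun x => x.2.unit
      invFun := fun u => ⟨u, u.isUnit⟩
      left_inv := fun x => by ext; simp
      right_inv := fun u => by ext; simp }

lemma card_filter_isUnit_add (a : ZMod m) :
    (univ.filter fun y : ZMod m => IsUnit (a + y)).card = Nat.totient m := by
  rw [← card_filter_isUnit (m := m)]
  apply Finset.card_bij (fun y _ => a + y)
  · intro y hy; simpa using (mem_filter.mp hy).2
  · intro y _ z _ h; exact add_left_cancel h
  · intro u hu
    exact ⟨u - a, by simpa using (mem_filter.mp hu), by ring⟩

lemma degree_unitGraph (hu2 : IsUnit (2 : ZMod m)) (a : ZMod m) :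
    (unitGraph m).degree a = Nat.totient m - (if IsUnit a then 1 else 0) := by
  rw [← SimpleGraph.card_neighborFinset_eq_degree]
  have h1 : (unitGraph m).neighborFinset a
      = (univ.filter fun y : ZMod m => IsUnit (a + y)).erase a := by
    ext y
    simp only [SimpleGraph.mem_neighborFinset, Finset.mem_erase, mem_filter, mem_univ, true_and]
    constructor
    · rintro ⟨hne, hu⟩; exact ⟨fun h => hne h.symm, hu⟩
    · rintro ⟨hne, hu⟩; exact ⟨fun h => hne h.symm, hu⟩
  rw [h1]
  have hmem : a ∈ (univ.filter fun y : ZMod m => IsUnit (a + y)) ↔ IsUnit a := by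
    simp only [mem_filter, mem_univ, true_and, ← two_mul]
    constructor
    · intro h
      exact isUnit_of_mul_isUnit_right h
    · intro h; exact hu2.mul h
  by_cases ha : IsUnit a
  · rw [Finset.card_erase_of_mem (hmem.mpr ha), card_filter_isUnit_add, if_pos ha]
  · rw [Finset.erase_eq_of_notMem (fun h => ha (hmem.mp h)), card_filter_isUnit_add, if_neg ha, Nat.sub_zero]

end Aux

section Code
open scoped Classical
variable (m : ℕ) [NeZero m]

noncomputable def rowL : (ZMod m → ZMod 2) →ₗ[ZMod 2] (↥(unitGraph m).edgeSet → ZMod 2) :=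
  Fintype.linearCombination (ZMod 2)
    (fun v => fun e : (unitGraph m).edgeSet => (unitGraph m).incMatrix (ZMod 2) v ↑e)

lemma graphCode_eq : graphCode (ZMod 2) (unitGraph m) = LinearMap.range (rowL m) := by
  rw [rowL, Fintype.range_linearCombination, graphCode]; congr!

variable {m}

lemma rowL_apply (f : ZMod m → ZMod 2) (x y : ZMod m) (h : s(x,y) ∈ (unitGraph m).edgeSet) :
    rowL m f ⟨s(x,y), h⟩ = f x + f y := by
  have hne : x ≠ y := ((unitGraph m).mem_edgeSet.mp h).1
  rw [rowL, Fintype.linearCombination_apply]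
  rw [Finset.sum_apply]
  rw [← Finset.sum_subset (Finset.subset_univ ({x, y} : Finset (ZMod m)))]
  · rw [Finset.sum_pair hne]
    have hx : (unitGraph m).incMatrix (ZMod 2) x s(x,y) = 1 :=
      (unitGraph m).incMatrix_of_mem_incidenceSet ⟨h, Sym2.mem_mk_left x y⟩
    have hy : (unitGraph m).incMatrix (ZMod 2) y s(x,y) = 1 :=
      (unitGraph m).incMatrix_of_mem_incidenceSet ⟨h, Sym2.mem_mk_right x y⟩
    simp [hx, hy]
  · intro v _ hv
    simp only [Finset.mem_insert, Finset.mem_singleton] at hv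
    push_neg at hv
    have : (unitGraph m).incMatrix (ZMod 2) v s(x,y) = 0 := by
      apply (unitGraph m).incMatrix_of_notMem_incidenceSet
      intro hmem
      rcases (Sym2.mem_iff).mp hmem.2 with h1 | h2
      exacts [hv.1 h1, hv.2 h2]
    simp [this]

end Code

section Dim
open scoped Classical
variable {m : ℕ} [NeZero m]

lemma zmod2_add_self (c : ZMod 2) : c + c = 0 := by revert c; decide

lemma zmod2_add_eq_zero {a b : ZMod 2} (h : a + b = 0) : a = b := by revert a b; decide

lemma ker_rowL_const (hm : m ≠ 1) (hlocal : ∀ x : ZMod m, ¬IsUnit x → IsUnit (x + 1))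
    (f : ZMod m → ZMod 2) (hf : rowL m f = 0) : ∀ x, f x = f 0 := by
  haveI : Fact (1 < m) := ⟨by have := NeZero.ne m; omega⟩
  have key : ∀ x y : ZMod m, (unitGraph m).Adj x y → f x = f y := by
    intro x y hadj
    have h1 : rowL m f ⟨s(x,y), (unitGraph m).mem_edgeSet.mpr hadj⟩ = 0 := by rw [hf]; rfl
    rw [rowL_apply] at h1
    exact zmod2_add_eq_zero h1
  intro x
  by_cases hx : x = 0
  · rw [hx]
  by_cases hu : IsUnit x
  · exact key x 0 ⟨hx, by simpa using hu⟩
  · have h1 : f x = f 1 := key x 1 ⟨fun h => hu (h ▸ isUnit_one), hlocal x hu⟩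
    have h2 : f 1 = f 0 := key 1 0 ⟨one_ne_zero, by simp⟩
    rw [h1, h2]

lemma finrank_range_rowL (hm : m ≠ 1) (hlocal : ∀ x : ZMod m, ¬IsUnit x → IsUnit (x + 1)) :
    Module.finrank (ZMod 2) ↥(LinearMap.range (rowL m)) = m - 1 := by
  classical
  set cL : ZMod 2 →ₗ[ZMod 2] (ZMod m → ZMod 2) := LinearMap.pi (fun _ => LinearMap.id) with hcL
  have hker : LinearMap.ker (rowL m) = LinearMap.range cL := by
    ext f
    constructor
    · intro hf
      refine ⟨f 0, ?_⟩
      ext x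
      exact (ker_rowL_const hm hlocal f (LinearMap.mem_ker.mp hf) x).symm
    · rintro ⟨c, rfl⟩
      rw [LinearMap.mem_ker]
      ext e
      obtain ⟨e, he⟩ := e
      induction e using Sym2.ind with
      | _ x y =>
        rw [rowL_apply]
        exact zmod2_add_self c
  have hinj : Function.Injective cL := by
    intro a b h
    have := congrFun h 0
    simpa [hcL] using this
  have h1 : Module.finrank (ZMod 2) ↥(LinearMap.ker (rowL m)) = 1 := by
    rw [hker, LinearMap.finrank_range_of_inj hinj, Module.finrank_self]
  have h2 := LinearMap.finrank_range_add_finrank_ker (rowL m)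
  rw [h1, Module.finrank_pi] at h2
  rw [ZMod.card] at h2
  omega

end Dim

section Count
open scoped Classical
variable {m : ℕ} [NeZero m]

lemma card_edges_unitGraph (hu2 : IsUnit (2 : ZMod m)) :
    2 * (unitGraph m).edgeFinset.card + Nat.totient m = m * Nat.totient m := by
  have h := SimpleGraph.sum_degrees_eq_twice_card_edges (unitGraph m)
  have hφ : 1 ≤ Nat.totient m := Nat.totient_pos.mpr (Nat.pos_of_ne_zero (NeZero.ne m))
  have h2 : ∑ v : ZMod m, ((unitGraph m).degree v + if IsUnit v then 1 else 0)
      = m * Nat.totient m := by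
    rw [Finset.sum_congr rfl (fun v _ => ?_), Finset.sum_const, Finset.card_univ, ZMod.card,
      smul_eq_mul]
    rw [degree_unitGraph hu2]
    split <;> omega
  rw [Finset.sum_add_distrib, h] at h2
  have h3 : (∑ x : ZMod m, if IsUnit x then 1 else 0) = Nat.totient m := by
    rw [Finset.sum_boole, ← card_filter_isUnit (m := m)]
    simp
  rw [h3] at h2
  exact h2

end Count

section MinDist
open scoped Classical
variable {m : ℕ} [NeZero m]

lemma rowL_const (c : ZMod 2) : rowL m (fun _ => c) = 0 := by
  ext e
  obtain ⟨e, he⟩ := e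
  induction e using Sym2.ind with
  | _ x y =>
    rw [rowL_apply]
    exact zmod2_add_self c

lemma zmod2_eq_zero_of_ne_one {a : ZMod 2} (h : a ≠ 1) : a = 0 := by revert a; decide

lemma prod_mul_aux (a b : ℕ) : a + b + 1 ≤ (a + 1) * (b + 1) := by nlinarith [Nat.zero_le (a * b)]

lemma weight_lower (hm : m ≠ 1) (hφ : m + 1 ≤ 2 * Nat.totient m)
    (f : ZMod m → ZMod 2)
    (hs1 : (Finset.univ.filter fun v : ZMod m => f v = 1).Nonempty)
    (hs2 : 2 * (Finset.univ.filter fun v : ZMod m => f v = 1).card ≤ m) :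
    Nat.totient m - 1 ≤ {e | rowL m f e ≠ 0}.ncard := by
  haveI : Fact (1 < m) := ⟨by have := NeZero.ne m; omega⟩
  set φ := Nat.totient m with hφdef
  set S := Finset.univ.filter fun v : ZMod m => f v = 1 with hSdef
  set s := S.card with hsdef
  have hs0 : 1 ≤ s := Finset.card_pos.mpr hs1
  have hsφ : s ≤ φ - 1 := by omega
  have hφ1 : 1 ≤ φ := by omega
  -- the crossing-pairs finset
  set T : Finset (ZMod m × ZMod m) :=
    S.biUnion (fun x => ({x} : Finset (ZMod m)) ×ˢ (Sᶜ.filter fun y => IsUnit (x + y))) with hTdef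
  have hTmem : ∀ q : ZMod m × ZMod m, q ∈ T ↔ (q.1 ∈ S ∧ q.2 ∉ S ∧ IsUnit (q.1 + q.2)) := by
    intro q
    simp only [hTdef, Finset.mem_biUnion, Finset.mem_product, Finset.mem_singleton,
      Finset.mem_filter, Finset.mem_compl]
    constructor
    · rintro ⟨x, hx, rfl, hy, hu⟩; exact ⟨hx, hy, hu⟩
    · rintro ⟨h1, h2, h3⟩; exact ⟨q.1, h1, rfl, h2, h3⟩
  have hTcard : s * (φ - s) ≤ T.card := by
    rw [hTdef, Finset.card_biUnion]
    · have each : ∀ x ∈ S, φ - s ≤ (({x} : Finset (ZMod m)) ×ˢ (Sᶜ.filter fun y => IsUnit (x + y))).card := by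
        intro x _
        rw [Finset.card_product, Finset.card_singleton, one_mul]
        have h1 : (Finset.univ.filter fun y : ZMod m => IsUnit (x + y)).card = φ :=
          card_filter_isUnit_add x
        have h2 : (Finset.univ.filter fun y : ZMod m => IsUnit (x + y))
            = (S.filter fun y => IsUnit (x + y)) ∪ (Sᶜ.filter fun y => IsUnit (x + y)) := by
          rw [← Finset.filter_union, Finset.union_compl]
        have h3 := Finset.card_union_le (S.filter fun y => IsUnit (x + y))
          (Sᶜ.filter fun y => IsUnit (x + y))
        have h4 := Finset.card_filter_le S (fun y => IsUnit (x + y))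
        rw [h2] at h1
        omega
      calc s * (φ - s) = ∑ _x ∈ S, (φ - s) := by rw [Finset.sum_const, smul_eq_mul]
        _ ≤ _ := Finset.sum_le_sum each
    · intro x _ y _ hxy
      simp only [Finset.disjoint_left]
      rintro ⟨a, b⟩ h1 h2
      simp only [Finset.mem_product, Finset.mem_singleton] at h1 h2
      exact hxy (h1.1.symm.trans h2.1)
  -- the weight set
  have hWfin : {e : ↥(unitGraph m).edgeSet | rowL m f e ≠ 0}.Finite := Set.toFinite _
  rw [Set.ncard_eq_toFinset_card _ hWfin]
  haveI hne : Nonempty ↥(unitGraph m).edgeSet := by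
    refine ⟨⟨s(1, 0), (unitGraph m).mem_edgeSet.mpr ⟨one_ne_zero, by simp⟩⟩⟩
  set F : ZMod m × ZMod m → ↥(unitGraph m).edgeSet := fun q =>
    if h : s(q.1, q.2) ∈ (unitGraph m).edgeSet then ⟨s(q.1, q.2), h⟩
    else Classical.arbitrary _ with hFdef
  have hTW : T.card ≤ hWfin.toFinset.card := by
    apply Finset.card_le_card_of_injOn F
    · intro q hq
      rw [Finset.mem_coe, hTmem] at hq
      obtain ⟨h1, h2, h3⟩ := hq
      have hfx : f q.1 = 1 := (Finset.mem_filter.mp h1).2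
      have hfy : f q.2 = 0 := by
        apply zmod2_eq_zero_of_ne_one
        intro h
        exact h2 (Finset.mem_filter.mpr ⟨Finset.mem_univ _, h⟩)
      have hne' : q.1 ≠ q.2 := fun h => by rw [h, hfy] at hfx; exact one_ne_zero hfx.symm
      have hmem : s(q.1, q.2) ∈ (unitGraph m).edgeSet := (unitGraph m).mem_edgeSet.mpr ⟨hne', h3⟩
      rw [Finset.mem_coe, Set.Finite.mem_toFinset]
      show rowL m f (F q) ≠ 0
      rw [hFdef]
      simp only [dif_pos hmem]
      rw [rowL_apply, hfx, hfy]
      exact one_ne_zero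
    · intro q hq q' hq' hFq
      rw [Finset.mem_coe, hTmem] at hq hq'
      obtain ⟨h1, h2, h3⟩ := hq
      obtain ⟨h1', h2', h3'⟩ := hq'
      have hne1 : q.1 ≠ q.2 := fun h => h2 (h ▸ h1)
      have hne1' : q'.1 ≠ q'.2 := fun h => h2' (h ▸ h1')
      have hmem : s(q.1, q.2) ∈ (unitGraph m).edgeSet := (unitGraph m).mem_edgeSet.mpr ⟨hne1, h3⟩
      have hmem' : s(q'.1, q'.2) ∈ (unitGraph m).edgeSet :=
        (unitGraph m).mem_edgeSet.mpr ⟨hne1', h3'⟩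
      rw [hFdef] at hFq
      simp only [dif_pos hmem, dif_pos hmem', Subtype.mk.injEq] at hFq
      rcases Sym2.eq_iff.mp hFq with ⟨e1, e2⟩ | ⟨e1, e2⟩
      · exact Prod.ext e1 e2
      · exact absurd (e1 ▸ h1) h2'
  have hkey : φ - 1 ≤ s * (φ - s) := by
    have h := prod_mul_aux (s - 1) (φ - s - 1)
    have e1 : s - 1 + 1 = s := by omega
    have e2 : φ - s - 1 + 1 = φ - s := by omega
    rw [e1, e2] at h
    omega
  exact hkey.trans (hTcard.trans hTW)

end MinDist

section Parts
open scoped Classical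
variable {m : ℕ} [NeZero m]

lemma zmod2_add_one_eq_one_iff (a : ZMod 2) : a + 1 = 1 ↔ ¬(a = 1) := by revert a; decide

lemma part3 (hm : m ≠ 1) (hφ : m + 1 ≤ 2 * Nat.totient m) :
    ∀ c ∈ graphCode (ZMod 2) (unitGraph m), c ≠ 0 →
      Nat.totient m - 1 ≤ {e | c e ≠ 0}.ncard := by
  intro c hc hc0
  rw [graphCode_eq] at hc
  obtain ⟨f, rfl⟩ := hc
  set S := Finset.univ.filter fun v : ZMod m => f v = 1 with hSdef
  have hSne : S.Nonempty := by
    rw [hSdef, Finset.filter_nonempty_iff]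
    by_contra h
    push_neg at h
    apply hc0
    have hf : f = fun _ => (0 : ZMod 2) := by
      funext v
      exact zmod2_eq_zero_of_ne_one (h v (Finset.mem_univ v))
    rw [hf, rowL_const]
  have hScne : Sᶜ.Nonempty := by
    rw [Finset.nonempty_iff_ne_empty]
    intro hemp
    have h : S = Finset.univ := by
      have := congrArg (·ᶜ) hemp
      simpa using this
    apply hc0
    have hf : f = fun _ => (1 : ZMod 2) := by
      funext v
      have : v ∈ S := h ▸ Finset.mem_univ v
      exact (Finset.mem_filter.mp this).2
    rw [hf, rowL_const]
  by_cases hle : 2 * S.card ≤ m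
  · exact weight_lower hm hφ f hSne hle
  · set g : ZMod m → ZMod 2 := f + fun _ => 1 with hgdef
    have hrow : rowL m g = rowL m f := by
      rw [hgdef, map_add, rowL_const, add_zero]
    have hgS : (Finset.univ.filter fun v : ZMod m => g v = 1) = Sᶜ := by
      ext v
      simp only [Finset.mem_filter, Finset.mem_univ, true_and, Finset.mem_compl, hSdef, hgdef,
        Pi.add_apply]
      exact zmod2_add_one_eq_one_iff (f v)
    have hcard : 2 * (Finset.univ.filter fun v : ZMod m => g v = 1).card ≤ m := by
      rw [hgS, Finset.card_compl, ZMod.card]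
      have hSle : S.card ≤ m := by
        have := Finset.card_le_univ S
        rwa [ZMod.card] at this
      omega
    have := weight_lower hm hφ g (by rw [hgS]; exact hScne) hcard
    rwa [hrow] at this

lemma part4 (hm : m ≠ 1) (hu2 : IsUnit (2 : ZMod m)) :
    ∃ c ∈ graphCode (ZMod 2) (unitGraph m),
      {e | c e ≠ 0}.ncard = Nat.totient m - 1 := by
  refine ⟨fun e => (unitGraph m).incMatrix (ZMod 2) 1 ↑e, Submodule.subset_span ⟨1, by congr!⟩, ?_⟩
  have hset : {e : ↥(unitGraph m).edgeSet | (unitGraph m).incMatrix (ZMod 2) 1 ↑e ≠ 0}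
      = {e : ↥(unitGraph m).edgeSet | (↑e : Sym2 (ZMod m)) ∈ (unitGraph m).incidenceSet 1} := by
    ext e
    simp only [Set.mem_setOf_eq, ne_eq, SimpleGraph.incMatrix_apply_eq_zero_iff, not_not]
  rw [hset]
  have hequiv : {e : ↥(unitGraph m).edgeSet // (↑e : Sym2 (ZMod m)) ∈ (unitGraph m).incidenceSet 1}
      ≃ ↥((unitGraph m).incidenceSet 1) :=
    { toFun := fun x => ⟨x.1.1, x.2⟩
      invFun := fun y => ⟨⟨y.1, y.2.1⟩, y.2⟩
      left_inv := fun x => rfl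
      right_inv := fun y => rfl }
  rw [← Nat.card_coe_set_eq]
  show Nat.card {e : ↥(unitGraph m).edgeSet // (↑e : Sym2 (ZMod m)) ∈ (unitGraph m).incidenceSet 1}
      = Nat.totient m - 1
  rw [Nat.card_congr hequiv]
  rw [Nat.card_eq_fintype_card]
  rw [SimpleGraph.card_incidenceSet_eq_degree]
  rw [degree_unitGraph hu2 1, if_pos isUnit_one]

end Parts

theorem unitGraph_primePow_binaryCode (p n : ℕ) [Fact p.Prime] (hodd : Odd p) (hn : 0 < n) :
    Nat.card ↥(unitGraph (p ^ n)).edgeSet = (p ^ n - 1) * Nat.totient (p ^ n) / 2 ∧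
    Module.finrank (ZMod 2) ↥(graphCode (ZMod 2) (unitGraph (p ^ n))) = p ^ n - 1 ∧
    (∀ c ∈ graphCode (ZMod 2) (unitGraph (p ^ n)), c ≠ 0 →
      Nat.totient (p ^ n) - 1 ≤ {e | c e ≠ 0}.ncard) ∧
    (∃ c ∈ graphCode (ZMod 2) (unitGraph (p ^ n)),
      {e | c e ≠ 0}.ncard = Nat.totient (p ^ n) - 1) := by
  classical
  have hp := (Fact.out : p.Prime)
  have hp3 : 3 ≤ p := by
    rcases hp.eq_two_or_odd with h | _
    · exact absurd (h ▸ hodd) (by decide)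
    · have := hp.two_le
      rcases Nat.lt_or_ge p 3 with h | h
      · interval_cases p
        · exact absurd hodd (by decide)
      · exact h
  haveI : NeZero (p ^ n) := ⟨pow_ne_zero n hp.ne_zero⟩
  have hm1 : p ^ n ≠ 1 := Nat.ne_of_gt (Nat.one_lt_pow hn.ne' hp.one_lt)
  have hu2 : IsUnit (2 : ZMod (p ^ n)) := by
    have : ((2 : ℕ) : ZMod (p ^ n)) = (2 : ZMod (p ^ n)) := by push_cast; ring
    rw [← this, ZMod.isUnit_iff_coprime]
    exact Nat.coprime_two_left.mpr (hodd.pow)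
  have hlocal : ∀ x : ZMod (p ^ n), ¬IsUnit x → IsUnit (x + 1) := by
    intro x hx
    have hx' : ¬ Nat.Coprime x.val (p ^ n) := by
      intro h
      apply hx
      have := (ZMod.isUnit_iff_coprime x.val (p ^ n)).mpr h
      rwa [ZMod.natCast_rightInverse x] at this
    have hpx : p ∣ x.val := by
      by_contra hdvd
      exact hx' (((hp.coprime_iff_not_dvd).mpr hdvd).symm.pow_right n)
    have hcop : Nat.Coprime (x.val + 1) p := by
      rw [Nat.coprime_comm, hp.coprime_iff_not_dvd]
      intro hd
      have h1 : p ∣ 1 := by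
        have := Nat.dvd_sub hd hpx
        simpa using this
      have := Nat.le_of_dvd one_pos h1
      omega
    have hu : IsUnit ((x.val + 1 : ℕ) : ZMod (p ^ n)) :=
      (ZMod.isUnit_iff_coprime _ _).mpr (hcop.pow_right n)
    have hcast : ((x.val + 1 : ℕ) : ZMod (p ^ n)) = x + 1 := by
      push_cast
      rw [ZMod.natCast_rightInverse x]
    rwa [hcast] at hu
  have hφineq : p ^ n + 1 ≤ 2 * Nat.totient (p ^ n) := by
    rw [Nat.totient_prime_pow hp hn]
    have hP : 1 ≤ p ^ (n - 1) := Nat.one_le_pow _ _ hp.pos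
    have hpow : p ^ n = p ^ (n - 1) * p := by
      rw [← pow_succ]
      congr 1
      omega
    set P := p ^ (n - 1)
    obtain ⟨q, hq⟩ : ∃ q, p = q + 1 := ⟨p - 1, by omega⟩
    have hq2 : 2 ≤ q := by omega
    rw [hpow, hq]
    have : p - 1 = q := by omega
    rw [hq] at this
    rw [this]
    nlinarith
  refine ⟨?_, ?_, ?_, ?_⟩
  · have h := card_edges_unitGraph (m := p ^ n) hu2
    rw [Nat.card_eq_fintype_card, ← SimpleGraph.edgeFinset_card]
    have hsub : (p ^ n - 1) * Nat.totient (p ^ n)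
        = p ^ n * Nat.totient (p ^ n) - Nat.totient (p ^ n) := Nat.sub_one_mul _ _
    omega
  · rw [graphCode_eq, finrank_range_rowL hm1 hlocal]
  · exact part3 hm1 hφineq
  · exact part4 hm1 hu2
end

section
/- Let n be a positive integer and q an odd prime, and let H be the incidence matrix of the unit graph G(Z_{2^n}) over the field F_q. Then the q-ary code C generated by the rows of H has length 2^{2(n-1)} (the number of edges of G(Z_{2^n})), dimension 2^n - 1 over F_q, and minimum distance 2^{n-1}: every nonzero codeword of C has Hamming weight at least 2^{n-1}, and some codeword has Hamming weight exactly 2^{n-1}. -/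
namespace UGAux

open Finset Set

instance instNeZeroPow (n : ℕ) : NeZero (2 ^ n) := ⟨(pow_pos (by norm_num) n).ne'⟩

variable {n : ℕ}

/-- parity ring hom -/
def pr (hn : 0 < n) : ZMod (2 ^ n) →+* ZMod 2 :=
  ZMod.castHom (dvd_pow_self 2 hn.ne') (ZMod 2)

lemma two_cases : ∀ a : ZMod 2, a = 0 ∨ a = 1 := by decide

lemma unit_iff (hn : 0 < n) (z : ZMod (2 ^ n)) : IsUnit z ↔ pr hn z = 1 := by
  have hz : ((z.val : ℕ) : ZMod (2 ^ n)) = z := ZMod.natCast_rightInverse z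
  have h1 : IsUnit z ↔ Nat.Coprime z.val 2 := by
    have h := ZMod.isUnit_iff_coprime z.val (2 ^ n)
    rw [hz] at h
    rw [h, Nat.coprime_pow_right_iff hn]
  have h2 : pr hn z = ((z.val : ℕ) : ZMod 2) := by
    rw [pr, ZMod.castHom_apply, ← ZMod.natCast_val]
  rw [h1, h2]
  have h3 : Nat.Coprime z.val 2 ↔ ¬ (2 ∣ z.val) := by
    rw [Nat.coprime_comm]
    exact Nat.Prime.coprime_iff_not_dvd Nat.prime_two
  have h4 : ((z.val : ℕ) : ZMod 2) = 0 ↔ 2 ∣ z.val := ZMod.natCast_eq_zero_iff _ _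
  rw [h3, ← h4]
  rcases two_cases ((z.val : ℕ) : ZMod 2) with h | h <;> simp [h]

lemma adj_iff (hn : 0 < n) (x y : ZMod (2 ^ n)) :
    (unitGraph (2 ^ n)).Adj x y ↔ pr hn x + pr hn y = 1 := by
  constructor
  · rintro ⟨-, hu⟩
    rw [unit_iff hn] at hu
    rwa [map_add] at hu
  · intro h
    refine ⟨?_, (unit_iff hn _).mpr (by rwa [map_add])⟩
    rintro rfl
    rcases two_cases (pr hn x) with h' | h' <;> rw [h'] at h <;> simp at h

lemma adj_of (hn : 0 < n) {x y : ZMod (2 ^ n)} (hx : pr hn x = 0) (hy : pr hn y = 1) :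
    (unitGraph (2 ^ n)).Adj x y := by
  rw [adj_iff hn, hx, hy, zero_add]

lemma edge_repr (hn : 0 < n) {e : Sym2 (ZMod (2 ^ n))}
    (he : e ∈ (unitGraph (2 ^ n)).edgeSet) :
    ∃ x y, pr hn x = 0 ∧ pr hn y = 1 ∧ e = s(x, y) := by
  induction e using Sym2.ind with
  | _ x y =>
    rw [SimpleGraph.mem_edgeSet, adj_iff hn] at he
    rcases two_cases (pr hn x) with h | h
    · rw [h, zero_add] at he
      exact ⟨x, y, h, he, rfl⟩
    · rcases two_cases (pr hn y) with h' | h'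
      · exact ⟨y, x, h', h, Sym2.eq_swap⟩
      · rw [h, h'] at he; simp at he

/-- fibers of parity have cardinality 2^(n-1) -/
lemma card_fiber (hn : 0 < n) (b : ZMod 2) :
    (univ.filter fun x : ZMod (2 ^ n) => pr hn x = b).card = 2 ^ (n - 1) := by
  have key : (univ.filter fun x : ZMod (2 ^ n) => pr hn x = 0).card
      = (univ.filter fun x : ZMod (2 ^ n) => pr hn x = 1).card := by
    refine Finset.card_bij' (fun x _ => x + 1) (fun y _ => y - 1) ?_ ?_ ?_ ?_
    · intro x hx
      simp only [Finset.mem_filter, Finset.mem_univ, true_and] at hx ⊢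
      rw [map_add, hx, map_one, zero_add]
    · intro y hy
      simp only [Finset.mem_filter, Finset.mem_univ, true_and] at hy ⊢
      rw [map_sub, hy, map_one, sub_self]
    · intro x _; ring
    · intro y _; ring
  have hsum : (univ.filter fun x : ZMod (2 ^ n) => pr hn x = 0).card
      + (univ.filter fun x : ZMod (2 ^ n) => pr hn x = 1).card = 2 ^ n := by
    have h := Finset.card_filter_add_card_filter_not
      (s := (Finset.univ : Finset (ZMod (2 ^ n)))) (p := fun x => pr hn x = 0)
    have heq : (univ.filter fun x : ZMod (2 ^ n) => ¬ pr hn x = 0)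
        = univ.filter fun x : ZMod (2 ^ n) => pr hn x = 1 := by
      apply Finset.filter_congr
      intro x _
      rcases two_cases (pr hn x) with h | h <;> simp [h]
    rw [heq] at h
    rw [h, Finset.card_univ, ZMod.card]
  have h2 : 2 ^ n = 2 * 2 ^ (n - 1) := by
    rw [← pow_succ']
    congr 1
    omega
  rcases two_cases b with rfl | rfl <;> omega


section General

variable {V : Type*} [Fintype V] {F : Type*} [Field F]

open Classical in
lemma sum_row (G : SimpleGraph V) (a : V → F) {x y : V} (hadj : G.Adj x y) :
    ∑ v, a v * G.incMatrix F v s(x, y) = a x + a y := by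
  have he : s(x, y) ∈ G.edgeSet := G.mem_edgeSet.mpr hadj
  have hv : ∀ v : V, G.incMatrix F v s(x, y) = if v = x ∨ v = y then (1 : F) else 0 := by
    intro v
    by_cases h : v = x ∨ v = y
    · rw [if_pos h, G.incMatrix_apply_eq_one_iff]
      exact ⟨he, Sym2.mem_iff.mpr h⟩
    · rw [if_neg h, G.incMatrix_apply_eq_zero_iff]
      intro hmem
      exact h (Sym2.mem_iff.mp hmem.2)
  have : ∀ v : V, a v * G.incMatrix F v s(x, y) = if v ∈ ({x, y} : Finset V) then a v else 0 := by
    intro v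
    rw [hv v]
    by_cases h : v = x ∨ v = y
    · rw [if_pos h, if_pos (by simp [Finset.mem_insert, h]), mul_one]
    · rw [if_neg h, if_neg (by simp [Finset.mem_insert]; tauto), mul_zero]
  rw [Finset.sum_congr rfl fun v _ => this v, Finset.sum_ite_mem, Finset.univ_inter,
    Finset.sum_pair hadj.ne]

open Classical in
/-- the generating linear map -/
noncomputable def Tmap (G : SimpleGraph V) : (V → F) →ₗ[F] (↥G.edgeSet → F) where
  toFun a := fun e => ∑ v, a v * G.incMatrix F v ↑e
  map_add' a b := by
    funext e
    simp [add_mul, Finset.sum_add_distrib]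
  map_smul' r a := by
    funext e
    simp [Finset.mul_sum, mul_assoc]

open Classical in
lemma graphCode_eq_range (G : SimpleGraph V) :
    graphCode F G = LinearMap.range (Tmap (F := F) G) := by
  ext c
  rw [graphCode, Submodule.mem_span_range_iff_exists_fun, LinearMap.mem_range]
  constructor
  · rintro ⟨a, ha⟩
    exact ⟨a, by rw [← ha]; funext e; simp [Tmap]⟩
  · rintro ⟨a, ha⟩
    exact ⟨a, by rw [← ha]; funext e; simp [Tmap]⟩

open Classical in
lemma mem_graphCode {G : SimpleGraph V} {c : ↥G.edgeSet → F} :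
    c ∈ graphCode F G ↔ ∃ a : V → F, ∀ e : ↥G.edgeSet, c e = ∑ v, a v * G.incMatrix F v ↑e := by
  rw [graphCode_eq_range, LinearMap.mem_range]
  constructor
  · rintro ⟨a, ha⟩
    exact ⟨a, fun e => by rw [← ha]; rfl⟩
  · rintro ⟨a, ha⟩
    exact ⟨a, by funext e; rw [ha e]; rfl⟩

omit [Fintype V] in
lemma ncard_supp {G : SimpleGraph V} (c : ↥G.edgeSet → F) (D : Set (Sym2 V))
    (hD : D ⊆ G.edgeSet) (h : ∀ e : ↥G.edgeSet, c e ≠ 0 ↔ ↑e ∈ D) :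
    {e : ↥G.edgeSet | c e ≠ 0}.ncard = D.ncard := by
  have h1 : {e : ↥G.edgeSet | c e ≠ 0} = Subtype.val ⁻¹' D := Set.ext h
  rw [h1, ← Set.ncard_image_of_injective _ Subtype.val_injective,
    Set.image_preimage_eq_of_subset (by rw [Subtype.range_coe]; exact hD)]

end General


section Spec

lemma inj_pair (hn : 0 < n) {x1 y1 x2 y2 : ZMod (2 ^ n)} (hx1 : pr hn x1 = 0)
    (hy1 : pr hn y1 = 1) (hx2 : pr hn x2 = 0) (hy2 : pr hn y2 = 1)
    (h : s(x1, y1) = s(x2, y2)) : x1 = x2 ∧ y1 = y2 := by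
  rw [Sym2.eq_iff] at h
  rcases h with ⟨h1, h2⟩ | ⟨h1, h2⟩
  · exact ⟨h1, h2⟩
  · exfalso
    rw [h1] at hx1
    rw [hx1] at hy2
    exact absurd hy2 (by decide)

lemma ncard_fiber (hn : 0 < n) (b : ZMod 2) :
    {x : ZMod (2 ^ n) | pr hn x = b}.ncard = 2 ^ (n - 1) := by
  have h : {x : ZMod (2 ^ n) | pr hn x = b} = ↑(univ.filter fun x : ZMod (2 ^ n) => pr hn x = b) := by
    ext x; simp
  rw [h, Set.ncard_coe_finset, card_fiber hn b]

lemma card_edges (hn : 0 < n) :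
    Nat.card ↥(unitGraph (2 ^ n)).edgeSet = 2 ^ (2 * (n - 1)) := by
  rw [Nat.card_coe_set_eq]
  have hset : (unitGraph (2 ^ n)).edgeSet
      = (fun p : ZMod (2 ^ n) × ZMod (2 ^ n) => s(p.1, p.2)) ''
        (↑((univ.filter fun x : ZMod (2 ^ n) => pr hn x = 0) ×ˢ
           (univ.filter fun y : ZMod (2 ^ n) => pr hn y = 1))) := by
    ext e
    constructor
    · intro he
      obtain ⟨x, y, hx, hy, rfl⟩ := edge_repr hn he
      exact ⟨(x, y), by simp [hx, hy], rfl⟩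
    · rintro ⟨⟨x, y⟩, hxy, rfl⟩
      simp only [Finset.coe_product, Set.mem_prod, Finset.mem_coe, Finset.mem_filter,
        Finset.mem_univ, true_and] at hxy
      exact (unitGraph (2 ^ n)).mem_edgeSet.mpr (adj_of hn hxy.1 hxy.2)
  rw [hset, Set.ncard_image_of_injOn, Set.ncard_coe_finset, Finset.card_product,
    card_fiber hn 0, card_fiber hn 1, ← pow_add]
  · congr 1; omega
  · rintro ⟨a1, b1⟩ h1 ⟨a2, b2⟩ h2 heq
    simp only [Finset.coe_product, Set.mem_prod, Finset.mem_coe, Finset.mem_filter,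
      Finset.mem_univ, true_and] at h1 h2
    obtain ⟨rfl, rfl⟩ := inj_pair hn h1.1 h1.2 h2.1 h2.2 heq
    rfl

variable {F : Type*} [Field F]

lemma ker_T (hn : 0 < n) :
    LinearMap.ker (Tmap (F := F) (unitGraph (2 ^ n)))
      = Submodule.span F {fun v : ZMod (2 ^ n) => if pr hn v = 0 then (1 : F) else -1} := by
  apply le_antisymm
  · intro a ha
    rw [LinearMap.mem_ker] at ha
    have key : ∀ x y : ZMod (2 ^ n), pr hn x = 0 → pr hn y = 1 → a x + a y = 0 := by
      intro x y hx hy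
      have hadj := adj_of hn hx hy
      have he : s(x, y) ∈ (unitGraph (2 ^ n)).edgeSet :=
        (unitGraph (2 ^ n)).mem_edgeSet.mpr hadj
      have hfc := congrFun ha (⟨s(x, y), he⟩ : ↥(unitGraph (2 ^ n)).edgeSet)
      simp only [Tmap, LinearMap.coe_mk, AddHom.coe_mk, Pi.zero_apply] at hfc
      rwa [sum_row _ a hadj] at hfc
    rw [Submodule.mem_span_singleton]
    refine ⟨a 0, funext fun v => ?_⟩
    have h01 : pr hn (0 : ZMod (2 ^ n)) = 0 := map_zero _
    have h11 : pr hn (1 : ZMod (2 ^ n)) = 1 := map_one _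
    rcases two_cases (pr hn v) with h | h
    · rw [Pi.smul_apply, smul_eq_mul, if_pos h, mul_one]
      linear_combination (key 0 1 h01 h11) - (key v 1 h h11)
    · rw [Pi.smul_apply, smul_eq_mul, if_neg (by rw [h]; exact one_ne_zero)]
      linear_combination -(key 0 v h01 h)
  · rw [Submodule.span_le, Set.singleton_subset_iff]
    rw [SetLike.mem_coe, LinearMap.mem_ker]
    funext e
    obtain ⟨x, y, hx, hy, hrep⟩ := edge_repr hn e.2
    simp only [Tmap, LinearMap.coe_mk, AddHom.coe_mk, Pi.zero_apply]
    rw [show ((e : Sym2 (ZMod (2 ^ n)))) = s(x, y) from hrep, sum_row _ _ (adj_of hn hx hy),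
      if_pos hx, if_neg (by rw [hy]; exact one_ne_zero)]
    ring

lemma finrank_code (hn : 0 < n) :
    Module.finrank F ↥(graphCode F (unitGraph (2 ^ n))) = 2 ^ n - 1 := by
  have h1 := LinearMap.finrank_range_add_finrank_ker (Tmap (F := F) (unitGraph (2 ^ n)))
  rw [Module.finrank_fintype_fun_eq_card, ZMod.card, ker_T hn] at h1
  have hu : (fun v : ZMod (2 ^ n) => if pr hn v = 0 then (1 : F) else -1) ≠ 0 := by
    intro h
    have h0 := congrFun h 0
    simp only [Pi.zero_apply, if_pos (map_zero (pr hn))] at h0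
    exact one_ne_zero h0
  rw [finrank_span_singleton hu] at h1
  rw [graphCode_eq_range]
  exact Nat.eq_sub_of_add_eq h1

lemma supp_lower (hn : 0 < n) {c : ↥(unitGraph (2 ^ n)).edgeSet → F}
    (hc : c ∈ graphCode F (unitGraph (2 ^ n))) (hne : c ≠ 0) :
    2 ^ (n - 1) ≤ {e | c e ≠ 0}.ncard := by
  obtain ⟨a, ha⟩ := mem_graphCode.mp hc
  set D : Set (Sym2 (ZMod (2 ^ n))) :=
    {e | ∃ x y, pr hn x = 0 ∧ pr hn y = 1 ∧ e = s(x, y) ∧ a x + a y ≠ 0} with hDdef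
  have hD : D ⊆ (unitGraph (2 ^ n)).edgeSet := by
    rintro e ⟨x, y, hx, hy, rfl, -⟩
    exact (unitGraph (2 ^ n)).mem_edgeSet.mpr (adj_of hn hx hy)
  have hch : ∀ e : ↥(unitGraph (2 ^ n)).edgeSet, c e ≠ 0 ↔ ↑e ∈ D := by
    intro e
    obtain ⟨x, y, hx, hy, hrep⟩ := edge_repr hn e.2
    have hce : c e = a x + a y := by
      rw [ha e, show ((e : Sym2 (ZMod (2 ^ n)))) = s(x, y) from hrep,
        sum_row _ a (adj_of hn hx hy)]
    constructor
    · intro h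
      exact ⟨x, y, hx, hy, hrep, by rwa [← hce]⟩
    · rintro ⟨x', y', hx', hy', hrep', hne'⟩
      have hss : s(x, y) = s(x', y') := by rw [← hrep, hrep']
      obtain ⟨rfl, rfl⟩ := inj_pair hn hx hy hx' hy' hss
      rwa [hce]
  rw [ncard_supp c D hD hch]
  by_cases hconst : ∀ x x' : ZMod (2 ^ n), pr hn x = 0 → pr hn x' = 0 → a x = a x'
  · have hex : ∃ e : ↥(unitGraph (2 ^ n)).edgeSet, c e ≠ 0 := by
      by_contra h
      push_neg at h
      exact hne (funext fun e => by simpa using h e)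
    obtain ⟨e0, he0⟩ := hex
    obtain ⟨x0, y0, hx0, hy0, -, hs0⟩ := (hch e0).mp he0
    rw [show (2 : ℕ) ^ (n - 1) = {x : ZMod (2 ^ n) | pr hn x = 0}.ncard from
      (ncard_fiber hn 0).symm]
    apply Set.ncard_le_ncard_of_injOn (fun x => s(x, y0))
    · intro x hx
      exact ⟨x, y0, hx, hy0, rfl, by rw [hconst x x0 hx hx0]; exact hs0⟩
    · intro x1 h1 x2 h2 heq
      exact (inj_pair hn h1 hy0 h2 hy0 heq).1
  · push_neg at hconst
    obtain ⟨x1, x2, hx1, hx2, hne12⟩ := hconst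
    have hch2 : ∀ y : ZMod (2 ^ n), pr hn y = 1 → ∃ x, pr hn x = 0 ∧ a x + a y ≠ 0 := by
      intro y hy
      by_contra h
      push_neg at h
      exact hne12 (by linear_combination (h x1 hx1) - (h x2 hx2))
    choose! xf hxf1 hxf2 using hch2
    rw [show (2 : ℕ) ^ (n - 1) = {y : ZMod (2 ^ n) | pr hn y = 1}.ncard from
      (ncard_fiber hn 1).symm]
    apply Set.ncard_le_ncard_of_injOn (fun y => s(xf y, y))
    · intro y hy
      exact ⟨xf y, y, hxf1 y hy, hy, rfl, hxf2 y hy⟩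
    · intro y1 h1 y2 h2 heq
      exact (inj_pair hn (hxf1 y1 h1) h1 (hxf1 y2 h2) h2 heq).2

open Classical in
lemma supp_exists (hn : 0 < n) :
    ∃ c ∈ graphCode F (unitGraph (2 ^ n)), {e | c e ≠ 0}.ncard = 2 ^ (n - 1) := by
  set G := unitGraph (2 ^ n) with hG
  refine ⟨fun e => G.incMatrix F 0 ↑e, Submodule.subset_span ⟨0, by congr!⟩, ?_⟩
  set D : Set (Sym2 (ZMod (2 ^ n))) :=
    (fun y => s((0 : ZMod (2 ^ n)), y)) '' {y | pr hn y = 1} with hDdef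
  have hD : D ⊆ G.edgeSet := by
    rintro e ⟨y, hy, rfl⟩
    exact G.mem_edgeSet.mpr (adj_of hn (map_zero _) hy)
  have hch : ∀ e : ↥G.edgeSet, G.incMatrix F 0 ↑e ≠ 0 ↔ ↑e ∈ D := by
    intro e
    rw [Ne, G.incMatrix_apply_eq_zero_iff, not_not]
    constructor
    · intro h
      obtain ⟨x, y, hx, hy, hrep⟩ := edge_repr hn e.2
      have h0 : (0 : ZMod (2 ^ n)) ∈ (↑e : Sym2 (ZMod (2 ^ n))) := h.2
      rw [hrep] at h0
      rcases Sym2.mem_iff.mp h0 with h0 | h0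
      · exact ⟨y, hy, by rw [hrep, ← h0]⟩
      · exfalso
        rw [← h0, map_zero] at hy
        exact absurd hy (by decide)
    · rintro ⟨y, hy, hrep⟩
      have hadj : G.Adj 0 y := adj_of hn (map_zero _) hy
      refine ⟨?_, ?_⟩
      · rw [← hrep]; exact G.mem_edgeSet.mpr hadj
      · rw [← hrep]; exact Sym2.mem_mk_left _ _
  rw [ncard_supp _ D hD hch, hDdef, Set.ncard_image_of_injOn, ncard_fiber hn 1]
  intro y1 h1 y2 h2 heq
  rw [Sym2.eq_iff] at heq
  rcases heq with ⟨-, h⟩ | ⟨h, h'⟩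
  · exact h
  · exfalso
    rw [h'] at h1
    have hcon : pr hn (0 : ZMod (2 ^ n)) = 1 := h1
    rw [map_zero] at hcon
    exact absurd hcon (by decide)

end Spec

end UGAux

theorem unitGraph_twoPow_qaryCode (n q : ℕ) (hn : 0 < n) [Fact q.Prime] (hq : Odd q) :
    Nat.card ↥(unitGraph (2 ^ n)).edgeSet = 2 ^ (2 * (n - 1)) ∧
    Module.finrank (ZMod q) ↥(graphCode (ZMod q) (unitGraph (2 ^ n))) = 2 ^ n - 1 ∧
    (∀ c ∈ graphCode (ZMod q) (unitGraph (2 ^ n)), c ≠ 0 →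
      2 ^ (n - 1) ≤ {e | c e ≠ 0}.ncard) ∧
    (∃ c ∈ graphCode (ZMod q) (unitGraph (2 ^ n)),
      {e | c e ≠ 0}.ncard = 2 ^ (n - 1)) := by
  refine ⟨UGAux.card_edges hn, UGAux.finrank_code hn,
    fun c hc hcne => UGAux.supp_lower hn hc hcne, UGAux.supp_exists hn⟩
end

section
/- Let n ≥ 2 be an integer and q an odd prime, let H be the incidence matrix of the unit graph G(Z_{2^n}) over F_q, and let C be the q-ary code generated by the rows of H. Then the dual code C^⊥ has length 2^{2(n-1)}, dimension 2^n·(2^{n-2} - 1) + 1 = 2^{2(n-1)} - 2^n + 1 over F_q, and minimum distance 4: every nonzero vector of C^⊥ has Hamming weight at least 4, and some vector of C^⊥ has Hamming weight exactly 4. -/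
noncomputable instance {V : Type*} [Finite V] (G : SimpleGraph V) : Fintype ↥G.edgeSet :=
  Fintype.ofFinite _

instance (p n : ℕ) [Fact p.Prime] : NeZero (p ^ n) :=
  ⟨pow_ne_zero n (Fact.out : p.Prime).ne_zero⟩

instance (n : ℕ) : NeZero (2 ^ n) := ⟨pow_ne_zero n two_ne_zero⟩

/-- The dual code: all vectors orthogonal to every codeword of `C` under the standard
    dot product. -/
noncomputable def dualCode {F : Type*} [Field F] {ι : Type*} [Fintype ι]
    (C : Submodule F (ι → F)) : Submodule F (ι → F) where
  carrier := {w | ∀ c ∈ C, ∑ e, w e * c e = 0}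
  add_mem' := by
    intro a b ha hb c hc
    simp only [Set.mem_setOf_eq] at *
    have h : ∑ e, (a + b) e * c e = (∑ e, a e * c e) + ∑ e, b e * c e := by
      rw [← Finset.sum_add_distrib]
      simp [add_mul]
    rw [h, ha c hc, hb c hc, add_zero]
  zero_mem' := by
    intro c hc
    simp
  smul_mem' := by
    intro r w hw c hc
    simp only [Set.mem_setOf_eq] at *
    have h : ∑ e, (r • w) e * c e = r * ∑ e, w e * c e := by
      rw [Finset.mul_sum]
      simp [mul_assoc]
    rw [h, hw c hc, mul_zero]


/-! ### Auxiliary lemmas -/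

section DotForm

variable {F : Type*} [Field F] {ι : Type*} [Fintype ι]

theorem sum_mul_comm' (a b : ι → F) : ∑ e, a e * b e = ∑ e, b e * a e :=
  Finset.sum_congr rfl fun e _ => mul_comm _ _

noncomputable def dotForm (F : Type*) [Field F] (ι : Type*) [Fintype ι] :
    LinearMap.BilinForm F (ι → F) :=
  LinearMap.mk₂ F (fun w c => ∑ e, w e * c e)
    (fun a b c => by simp [add_mul, Finset.sum_add_distrib])
    (fun r a c => by simp [Finset.mul_sum, mul_assoc])
    (fun a b c => by simp [mul_add, Finset.sum_add_distrib])
    (fun r a c => by simp only [Finset.mul_sum, smul_eq_mul, Pi.smul_apply]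
                     exact Finset.sum_congr rfl fun e _ => by ring)

theorem dotForm_apply (w c : ι → F) : dotForm F ι w c = ∑ e, w e * c e := rfl

theorem dotForm_isSymm : (dotForm F ι).IsSymm := by
  refine ⟨fun w c => ?_⟩
  simp only [dotForm_apply, RingHom.id_apply]
  exact sum_mul_comm' w c

theorem dotForm_nondeg [DecidableEq ι] : (dotForm F ι).Nondegenerate := by
  constructor
  all_goals
    intro w h
    funext i
    have := h (Pi.single i 1)
    simpa [dotForm_apply, Pi.single_apply, mul_ite] using this

theorem dualCode_eq_orthogonal (C : Submodule F (ι → F)) :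
    dualCode C = (dotForm F ι).orthogonal C := by
  ext w
  constructor
  · intro hw c hc
    show dotForm F ι c w = 0
    rw [dotForm_apply, ← sum_mul_comm']
    exact hw c hc
  · intro hw c hc
    have : dotForm F ι c w = 0 := hw c hc
    rw [dotForm_apply] at this
    rw [sum_mul_comm']
    exact this

theorem finrank_add_finrank_dualCode [DecidableEq ι] (C : Submodule F (ι → F)) :
    Module.finrank F C + Module.finrank F (dualCode C) = Fintype.card ι := by
  rw [dualCode_eq_orthogonal]
  have h := LinearMap.BilinForm.finrank_add_finrank_orthogonal
    (B := dotForm F ι) dotForm_isSymm.isRefl C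
  rw [LinearMap.BilinForm.orthogonal_top_eq_bot dotForm_nondeg,
    inf_bot_eq, finrank_bot, add_zero, Module.finrank_pi] at h
  exact h

end DotForm

section GraphCode

variable {F : Type*} [Field F] {V : Type*} [Finite V] (G : SimpleGraph V)

theorem incMatrix_edge_eq [DecidableEq V] [DecidableRel G.Adj] (e : G.edgeSet) (v : V) [Decidable (v ∈ (e : Sym2 V))] :
    G.incMatrix F v ↑e = if v ∈ (e : Sym2 V) then 1 else 0 := by
  by_cases h : v ∈ (e : Sym2 V)
  · rw [if_pos h]
    exact G.incMatrix_of_mem_incidenceSet (G.edge_mem_incidenceSet_iff.2 h)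
  · rw [if_neg h]
    exact G.incMatrix_of_notMem_incidenceSet (fun hm => h (G.edge_mem_incidenceSet_iff.1 hm))

theorem mem_graphCode_dual_iff [DecidableEq V] [DecidableRel G.Adj] (w : ↥G.edgeSet → F) :
    w ∈ dualCode (graphCode F G) ↔ ∀ v : V, ∑ e : G.edgeSet, w e * G.incMatrix F v ↑e = 0 := by
  have hgc : graphCode F G =
      Submodule.span F (Set.range fun v : V => fun e : G.edgeSet => G.incMatrix F v ↑e) := by
    unfold graphCode; congr!
  rw [hgc]
  constructor
  · intro hw v
    exact hw _ (Submodule.subset_span ⟨v, rfl⟩)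
  · intro h c hc
    have hc' : c ∈ Submodule.span F
        (Set.range fun v : V => fun e : G.edgeSet => G.incMatrix F v ↑e) := hc
    clear hc
    induction hc' using Submodule.span_induction with
    | mem x hx => obtain ⟨v, rfl⟩ := hx; exact h v
    | zero => simp
    | add x y hx hy ihx ihy =>
        have hsplit : ∑ e, w e * (x + y) e = (∑ e, w e * x e) + ∑ e, w e * y e := by
          rw [← Finset.sum_add_distrib]
          exact Finset.sum_congr rfl fun e _ => by simp [mul_add]
        rw [hsplit, ihx, ihy, add_zero]
    | smul a x hx ihx =>
        have hsplit : ∑ e, w e * (a • x) e = a * ∑ e, w e * x e := by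
          rw [Finset.mul_sum]
          exact Finset.sum_congr rfl fun e _ => by simp only [Pi.smul_apply, smul_eq_mul]; ring
        rw [hsplit, ihx, mul_zero]

theorem exists_other_support_edge {w : ↥G.edgeSet → F}
    (hw : w ∈ dualCode (graphCode F G)) (e : G.edgeSet) (he : w e ≠ 0)
    (v : V) (hv : v ∈ (e : Sym2 V)) :
    ∃ e' : G.edgeSet, w e' ≠ 0 ∧ e' ≠ e ∧ v ∈ (e' : Sym2 V) := by
  classical
  by_contra hcon
  push_neg at hcon
  have hsum := (mem_graphCode_dual_iff G w).1 hw v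
  have heq : ∑ e' : G.edgeSet, w e' * G.incMatrix F v ↑e' = w e := by
    rw [Finset.sum_eq_single e]
    · rw [incMatrix_edge_eq, if_pos hv, mul_one]
    · intro b _ hbe
      by_cases hb : w b = 0
      · rw [hb, zero_mul]
      · have : ¬ v ∈ (b : Sym2 V) := hcon b hb hbe
        rw [incMatrix_edge_eq, if_neg this, mul_zero]
    · intro hmem
      exact absurd (Finset.mem_univ e) hmem
  rw [heq] at hsum
  exact he hsum

end GraphCode

section Parity

def eps {n : ℕ} (hn : n ≠ 0) : ZMod (2 ^ n) →+* ZMod 2 :=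
  ZMod.castHom (dvd_pow_self 2 hn) (ZMod 2)

theorem eps_cases {n : ℕ} (hn : n ≠ 0) (z : ZMod (2 ^ n)) :
    eps hn z = 0 ∨ eps hn z = 1 := by
  generalize eps hn z = a
  revert a; decide

theorem isUnit_iff_eps {n : ℕ} (hn : n ≠ 0) (z : ZMod (2 ^ n)) :
    IsUnit z ↔ eps hn z = 1 := by
  have hz : ((z.val : ℕ) : ZMod (2 ^ n)) = z := by rw [ZMod.natCast_val, ZMod.cast_id]
  have heps : eps hn z = ((z.val : ℕ) : ZMod 2) := by
    rw [eps, ZMod.castHom_apply, ← ZMod.natCast_val]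
  have h1 : IsUnit z ↔ z.val.Coprime (2 ^ n) := by
    rw [← ZMod.isUnit_iff_coprime, hz]
  rw [h1, heps, Nat.coprime_pow_right_iff (Nat.pos_of_ne_zero hn)]
  rw [Nat.coprime_two_right, Nat.odd_iff]
  rw [← ZMod.natCast_mod z.val 2]
  rcases Nat.mod_two_eq_zero_or_one z.val with h | h <;> rw [h] <;> simp

theorem adj_iff_eps {n : ℕ} (hn : n ≠ 0) (x y : ZMod (2 ^ n)) :
    (unitGraph (2 ^ n)).Adj x y ↔ eps hn x + eps hn y = 1 := by
  constructor
  · intro ⟨_, hu⟩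
    rw [isUnit_iff_eps hn, map_add] at hu
    exact hu
  · intro h
    have hxy : x ≠ y := by
      rintro rfl
      rw [CharTwo.add_self_eq_zero] at h
      exact (zero_ne_one h)
    exact ⟨hxy, (isUnit_iff_eps hn _).2 (by rw [map_add]; exact h)⟩

theorem eps_ne_of_adj {n : ℕ} (hn : n ≠ 0) {x y : ZMod (2 ^ n)}
    (h : (unitGraph (2 ^ n)).Adj x y) : eps hn x ≠ eps hn y := by
  rw [adj_iff_eps hn] at h
  intro he
  rw [he, CharTwo.add_self_eq_zero] at h
  exact zero_ne_one h

theorem card_eps_one {n : ℕ} (hn : n ≠ 0) :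
    Fintype.card {z : ZMod (2 ^ n) // eps hn z = 1} = 2 ^ (n - 1) ∧
    Fintype.card {z : ZMod (2 ^ n) // eps hn z = 0} = 2 ^ (n - 1) := by
  have e01 : {z : ZMod (2 ^ n) // eps hn z = 0} ≃ {z : ZMod (2 ^ n) // eps hn z = 1} := by
    refine ⟨fun z => ⟨z.1 + 1, by rw [map_add, z.2, map_one, zero_add]⟩,
      fun z => ⟨z.1 - 1, by rw [map_sub, z.2, map_one, sub_self]⟩, ?_, ?_⟩
    · intro z; ext; simp
    · intro z; ext; simp
  have ecompl : {z : ZMod (2 ^ n) // ¬ eps hn z = 0} ≃ {z : ZMod (2 ^ n) // eps hn z = 1} :=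
    Equiv.subtypeEquivRight (fun z => by
      rcases eps_cases hn z with h | h <;> simp [h])
  have hcompl := Fintype.card_subtype_compl (fun z : ZMod (2 ^ n) => eps hn z = 0)
  have hcard : Fintype.card (ZMod (2 ^ n)) = 2 ^ n := ZMod.card _
  have h01 : Fintype.card {z : ZMod (2 ^ n) // eps hn z = 0}
      = Fintype.card {z : ZMod (2 ^ n) // eps hn z = 1} := Fintype.card_congr e01
  have hle : Fintype.card {z : ZMod (2 ^ n) // eps hn z = 0} ≤ Fintype.card (ZMod (2 ^ n)) :=
    Fintype.card_subtype_le _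
  have hcc := Fintype.card_congr ecompl
  have hpow : 2 ^ n = 2 * 2 ^ (n - 1) := by
    rw [← pow_succ']
    congr 1
    omega
  constructor <;> omega

theorem card_edges {n : ℕ} (hn : n ≠ 0) :
    Nat.card ↥(unitGraph (2 ^ n)).edgeSet = 2 ^ (2 * (n - 1)) := by
  set G := unitGraph (2 ^ n) with hG
  let f : {z : ZMod (2 ^ n) // eps hn z = 0} × {z : ZMod (2 ^ n) // eps hn z = 1} →
      ↥G.edgeSet := fun p => ⟨s(p.1.1, p.2.1), by
    rw [SimpleGraph.mem_edgeSet, hG, adj_iff_eps hn, p.1.2, p.2.2, zero_add]⟩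
  have hbij : Function.Bijective f := by
    constructor
    · rintro ⟨a, b⟩ ⟨a', b'⟩ hab
      have h : s(a.1, b.1) = s(a'.1, b'.1) := congrArg Subtype.val hab
      rw [Sym2.eq_iff] at h
      rcases h with ⟨h1, h2⟩ | ⟨h1, h2⟩
      · exact Prod.ext (Subtype.ext h1) (Subtype.ext h2)
      · exfalso
        have := a.2
        rw [h1, b'.2] at this
        exact absurd this (by decide)
    · rintro ⟨e, he⟩
      induction e using Sym2.ind with
      | _ x y =>
        rw [SimpleGraph.mem_edgeSet, hG, adj_iff_eps hn] at he
        rcases eps_cases hn x with hx | hx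
        · have hy : eps hn y = 1 := by rwa [hx, zero_add] at he
          exact ⟨(⟨x, hx⟩, ⟨y, hy⟩), Subtype.ext rfl⟩
        · have hy : eps hn y = 0 := by
            rcases eps_cases hn y with h | h
            · exact h
            · rw [hx, h] at he; exact absurd he (by decide)
          exact ⟨(⟨y, hy⟩, ⟨x, hx⟩), Subtype.ext Sym2.eq_swap⟩
  have hcong := Nat.card_congr (Equiv.ofBijective f hbij)
  rw [← hcong, Nat.card_prod, Nat.card_eq_fintype_card, Nat.card_eq_fintype_card,
    (card_eps_one hn).1, (card_eps_one hn).2, ← pow_add]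
  congr 1
  omega

end Parity


section Rank

theorem sum_mul_incMatrix {F : Type*} [Field F] {V : Type*} [Fintype V] [DecidableEq V]
    (G : SimpleGraph V) [DecidableRel G.Adj] (c : V → F) {x y : V} (hadj : G.Adj x y) :
    ∑ v, c v * G.incMatrix F v s(x, y) = c x + c y := by
  have hne := hadj.ne
  have hinc : ∀ v, G.incMatrix F v s(x, y) = if v = x ∨ v = y then 1 else 0 := by
    intro v
    by_cases h : v = x ∨ v = y
    · rw [if_pos h]
      exact G.incMatrix_of_mem_incidenceSet (G.mk'_mem_incidenceSet_iff.2 ⟨hadj, h⟩)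
    · rw [if_neg h]
      exact G.incMatrix_of_notMem_incidenceSet
        (fun hm => h (G.mk'_mem_incidenceSet_iff.1 hm).2)
  have hsplit : ∀ v ∈ Finset.univ, c v * G.incMatrix F v s(x, y) =
      (if v = x then c v else 0) + (if v = y then c v else 0) := by
    intro v _
    rw [hinc v]
    by_cases hvx : v = x <;> by_cases hvy : v = y
    · exact absurd (hvx.symm.trans hvy) hne
    · simp [hvx, hvy, hne, Ne.symm hne]
    · simp [hvx, hvy, hne, Ne.symm hne]
    · simp [hvx, hvy, hne, Ne.symm hne]
  rw [Finset.sum_congr rfl hsplit, Finset.sum_add_distrib]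
  simp

theorem finrank_graphCode (n q : ℕ) (hn : n ≠ 0) [Fact q.Prime] :
    Module.finrank (ZMod q) ↥(graphCode (ZMod q) (unitGraph (2 ^ n))) = 2 ^ n - 1 := by
  classical
  set G := unitGraph (2 ^ n) with hG
  let row : ZMod (2 ^ n) → (↥G.edgeSet → ZMod q) := fun v => fun e => G.incMatrix (ZMod q) v ↑e
  let Φ := Fintype.linearCombination (ZMod q) row
  have hΦapp : ∀ (c : ZMod (2 ^ n) → ZMod q) (e : ↥G.edgeSet),
      Φ c e = ∑ v, c v * G.incMatrix (ZMod q) v ↑e := by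
    intro c e
    show (Fintype.linearCombination (ZMod q) row) c e = _
    rw [Fintype.linearCombination_apply]
    rw [Finset.sum_apply]
    exact Finset.sum_congr rfl fun v _ => rfl
  have hrange : LinearMap.range Φ = graphCode (ZMod q) G :=
    (Fintype.range_linearCombination (ZMod q) row).trans (by unfold graphCode; congr!)
  -- the kernel element
  let σ : ZMod (2 ^ n) → ZMod q := fun v => if eps hn v = 0 then 1 else -1
  have heps0 : eps hn (0 : ZMod (2 ^ n)) = 0 := map_zero _
  have heps1 : eps hn (1 : ZMod (2 ^ n)) = 1 := map_one _
  have hkermem : ∀ c : ZMod (2 ^ n) → ZMod q,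
      c ∈ LinearMap.ker Φ ↔ ∀ x y, G.Adj x y → c x + c y = 0 := by
    intro c
    rw [LinearMap.mem_ker]
    constructor
    · intro h x y hadj
      have := congrFun h ⟨s(x, y), hadj⟩
      rw [hΦapp] at this
      simp only [Pi.zero_apply] at this
      rw [← sum_mul_incMatrix G c hadj]
      exact this
    · intro h
      funext e
      obtain ⟨e, he⟩ := e
      simp only [Pi.zero_apply]
      induction e using Sym2.ind with
      | _ x y =>
        rw [hΦapp]
        have hadj : G.Adj x y := he
        rw [sum_mul_incMatrix G c hadj]
        exact h x y hadj
  have hσ : σ ∈ LinearMap.ker Φ := by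
    rw [hkermem]
    intro x y hadj
    have hne := eps_ne_of_adj hn (by rwa [hG] at hadj)
    rcases eps_cases hn x with hx | hx <;> rcases eps_cases hn y with hy | hy
    · exact absurd (hx.trans hy.symm) hne
    · simp [σ, hx, hy]
    · simp [σ, hx, hy]
    · exact absurd (hx.trans hy.symm) hne
  have hσ0 : σ 0 = 1 := by simp [σ, heps0]
  have hσne : σ ≠ 0 := by
    intro h
    have := congrFun h 0
    rw [hσ0] at this
    exact one_ne_zero this
  have hker : LinearMap.ker Φ = Submodule.span (ZMod q) {σ} := by
    apply le_antisymm
    · intro c hc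
      rw [hkermem] at hc
      rw [Submodule.mem_span_singleton]
      refine ⟨c 0, funext fun v => ?_⟩
      have hadj01 : G.Adj 0 1 := by
        rw [hG, adj_iff_eps hn, heps0, heps1, zero_add]
      have h01 : c 0 + c 1 = 0 := hc 0 1 hadj01
      rcases eps_cases hn v with hv | hv
      · have hadjv1 : G.Adj v 1 := by
          rw [hG, adj_iff_eps hn, hv, heps1, zero_add]
        have hv1 : c v + c 1 = 0 := hc v 1 hadjv1
        show c 0 • σ v = c v
        rw [smul_eq_mul]
        simp only [σ, if_pos hv]
        rw [mul_one]
        linear_combination h01 - hv1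
      · have hadj0v : G.Adj 0 v := by
          rw [hG, adj_iff_eps hn, heps0, hv, zero_add]
        have h0v : c 0 + c v = 0 := hc 0 v hadj0v
        show c 0 • σ v = c v
        rw [smul_eq_mul]
        simp only [σ]
        rw [if_neg (by rw [hv]; exact one_ne_zero), mul_neg, mul_one]
        linear_combination -h0v
    · rw [Submodule.span_le, Set.singleton_subset_iff]
      exact hσ
  have hkerrank : Module.finrank (ZMod q) ↥(LinearMap.ker Φ) = 1 := by
    rw [hker]
    exact finrank_span_singleton hσne
  have hrn := LinearMap.finrank_range_add_finrank_ker Φ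
  rw [hrange, hkerrank, Module.finrank_pi, ZMod.card] at hrn
  have hp : 1 ≤ 2 ^ n := Nat.one_le_two_pow
  omega

end Rank


section MinDist

theorem dist_lower (n q : ℕ) (hn : n ≠ 0) [Fact q.Prime]
    {w : ↥(unitGraph (2 ^ n)).edgeSet → ZMod q}
    (hw : w ∈ dualCode (graphCode (ZMod q) (unitGraph (2 ^ n)))) (hw0 : w ≠ 0) :
    4 ≤ {e | w e ≠ 0}.ncard := by
  classical
  obtain ⟨e1, he1⟩ : ∃ e, w e ≠ 0 := by
    by_contra h
    push_neg at h
    apply hw0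
    funext e
    rw [Pi.zero_apply]
    exact h e
  obtain ⟨x, y, hxy⟩ : ∃ x y : ZMod (2 ^ n), s(x, y) = (e1 : Sym2 (ZMod (2 ^ n))) :=
    (Sym2.exists (f := fun z => z = (e1 : Sym2 (ZMod (2 ^ n))))).1 ⟨_, rfl⟩
  have hadjxy : (unitGraph (2 ^ n)).Adj x y := by
    rw [← SimpleGraph.mem_edgeSet, hxy]
    exact e1.2
  have hx1 : x ∈ (e1 : Sym2 (ZMod (2 ^ n))) := by rw [← hxy]; exact Sym2.mem_mk_left x y
  have hy1 : y ∈ (e1 : Sym2 (ZMod (2 ^ n))) := by rw [← hxy]; exact Sym2.mem_mk_right x y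
  -- second edge at x
  obtain ⟨e2, hwe2, h21, hx2⟩ := exists_other_support_edge (unitGraph (2 ^ n)) hw e1 he1 x hx1
  set y' := Sym2.Mem.other' hx2 with hy'def
  have he2eq : s(x, y') = (e2 : Sym2 (ZMod (2 ^ n))) := Sym2.other_spec' hx2
  have hadjxy' : (unitGraph (2 ^ n)).Adj x y' := by
    rw [← SimpleGraph.mem_edgeSet, he2eq]
    exact e2.2
  -- second edge at y
  obtain ⟨e3, hwe3, h31, hy3⟩ := exists_other_support_edge (unitGraph (2 ^ n)) hw e1 he1 y hy1
  set x3 := Sym2.Mem.other' hy3 with hx3def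
  have he3eq : s(y, x3) = (e3 : Sym2 (ZMod (2 ^ n))) := Sym2.other_spec' hy3
  have hadjyx3 : (unitGraph (2 ^ n)).Adj y x3 := by
    rw [← SimpleGraph.mem_edgeSet, he3eq]
    exact e3.2
  -- second edge at y'
  have hy'2 : y' ∈ (e2 : Sym2 (ZMod (2 ^ n))) := by rw [← he2eq]; exact Sym2.mem_mk_right x y'
  obtain ⟨e4, hwe4, h42, hy'4⟩ := exists_other_support_edge (unitGraph (2 ^ n)) hw e2 hwe2 y' hy'2
  -- parity facts
  have hexy : eps hn x + eps hn y = 1 := (adj_iff_eps hn x y).1 hadjxy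
  have hexy' : eps hn x + eps hn y' = 1 := (adj_iff_eps hn x y').1 hadjxy'
  have heyx3 : eps hn y + eps hn x3 = 1 := (adj_iff_eps hn y x3).1 hadjyx3
  have hepsyy' : eps hn y' = eps hn y := by
    have : eps hn x + eps hn y' = eps hn x + eps hn y := by rw [hexy', hexy]
    exact add_left_cancel this
  have hepsx3 : eps hn x3 = eps hn x := by
    have h1 : eps hn x3 + eps hn y = eps hn x + eps hn y := by
      rw [add_comm (eps hn x3)]; rw [heyx3, hexy]
    exact add_right_cancel h1
  have hepsne : eps hn x ≠ eps hn y := eps_ne_of_adj hn hadjxy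
  -- distinctness
  have hy'nex : y' ≠ x := by
    intro h
    rw [h] at hepsyy'
    exact hepsne hepsyy'
  have hy'ney : y' ≠ y := by
    intro h
    rw [h] at he2eq
    exact h21 (Subtype.ext (he2eq.symm.trans hxy))
  have h32 : e3 ≠ e2 := by
    intro h
    have : y ∈ (e2 : Sym2 (ZMod (2 ^ n))) := by rw [← h, ← he3eq]; exact Sym2.mem_mk_left y x3
    rw [← he2eq, Sym2.mem_iff] at this
    rcases this with h' | h'
    · exact hepsne (by rw [h'])
    · exact hy'ney h'.symm
  have h41 : e4 ≠ e1 := by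
    intro h
    have : y' ∈ (e1 : Sym2 (ZMod (2 ^ n))) := h ▸ hy'4
    rw [← hxy, Sym2.mem_iff] at this
    rcases this with h' | h'
    · exact hy'nex h'
    · exact hy'ney h'
  have h43 : e4 ≠ e3 := by
    intro h
    have : y' ∈ (e3 : Sym2 (ZMod (2 ^ n))) := h ▸ hy'4
    rw [← he3eq, Sym2.mem_iff] at this
    rcases this with h' | h'
    · exact hy'ney h'
    · rw [h'] at hepsyy'
      rw [hepsx3] at hepsyy'
      exact hepsne hepsyy'
  -- conclude
  have hsub : ({e4, e3, e2, e1} : Set ↥(unitGraph (2 ^ n)).edgeSet) ⊆ {e | w e ≠ 0} := by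
    intro e he
    rcases he with rfl | rfl | rfl | rfl
    · exact hwe4
    · exact hwe3
    · exact hwe2
    · exact he1
  have hcard : ({e4, e3, e2, e1} : Set ↥(unitGraph (2 ^ n)).edgeSet).ncard = 4 := by
    rw [Set.ncard_insert_of_notMem (by simp [h43, h42, h41]) (Set.toFinite _),
      Set.ncard_insert_of_notMem (by simp [h32, h31]) (Set.toFinite _),
      Set.ncard_pair h21]
  calc (4 : ℕ) = ({e4, e3, e2, e1} : Set ↥(unitGraph (2 ^ n)).edgeSet).ncard := hcard.symm
    _ ≤ {e | w e ≠ 0}.ncard := Set.ncard_le_ncard hsub (Set.toFinite _)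

end MinDist


section Construction

theorem exists_weight_four (n q : ℕ) (hn : 2 ≤ n) [Fact q.Prime] :
    ∃ w ∈ dualCode (graphCode (ZMod q) (unitGraph (2 ^ n))),
      w ≠ 0 ∧ {e | w e ≠ 0}.ncard = 4 := by
  classical
  have hn0 : n ≠ 0 := by omega
  have h4 : 4 ≤ 2 ^ n := by
    calc (4 : ℕ) = 2 ^ 2 := rfl
    _ ≤ 2 ^ n := Nat.pow_le_pow_right (by norm_num) hn
  have hdist : ∀ k l : ℕ, k < 4 → l < 4 → k ≠ l →
      ((k : ZMod (2 ^ n)) ≠ (l : ZMod (2 ^ n))) := by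
    intro k l hk hl hkl h
    have hk' : k < 2 ^ n := lt_of_lt_of_le hk h4
    have hl' : l < 2 ^ n := lt_of_lt_of_le hl h4
    apply hkl
    rw [← ZMod.val_cast_of_lt hk', ← ZMod.val_cast_of_lt hl', h]
  set G := unitGraph (2 ^ n) with hG
  set a0 : ZMod (2 ^ n) := ((0 : ℕ) : ZMod (2 ^ n)) with ha0
  set a1 : ZMod (2 ^ n) := ((1 : ℕ) : ZMod (2 ^ n)) with ha1
  set a2 : ZMod (2 ^ n) := ((2 : ℕ) : ZMod (2 ^ n)) with ha2
  set a3 : ZMod (2 ^ n) := ((3 : ℕ) : ZMod (2 ^ n)) with ha3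
  have h01 : a0 ≠ a1 := hdist 0 1 (by norm_num) (by norm_num) (by norm_num)
  have h02 : a0 ≠ a2 := hdist 0 2 (by norm_num) (by norm_num) (by norm_num)
  have h03 : a0 ≠ a3 := hdist 0 3 (by norm_num) (by norm_num) (by norm_num)
  have h12 : a1 ≠ a2 := hdist 1 2 (by norm_num) (by norm_num) (by norm_num)
  have h13 : a1 ≠ a3 := hdist 1 3 (by norm_num) (by norm_num) (by norm_num)
  have h23 : a2 ≠ a3 := hdist 2 3 (by norm_num) (by norm_num) (by norm_num)
  have hadj : ∀ k l : ℕ, ((k : ZMod 2) + (l : ZMod 2) = 1) →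
      G.Adj ((k : ℕ) : ZMod (2 ^ n)) ((l : ℕ) : ZMod (2 ^ n)) := by
    intro k l h
    rw [hG, adj_iff_eps hn0, map_natCast, map_natCast]
    exact h
  have adja : G.Adj a0 a1 := hadj 0 1 (by decide)
  have adjb : G.Adj a0 a3 := hadj 0 3 (by decide)
  have adjc : G.Adj a2 a1 := hadj 2 1 (by decide)
  have adjd : G.Adj a2 a3 := hadj 2 3 (by decide)
  set ea : ↥G.edgeSet := ⟨s(a0, a1), G.mem_edgeSet.2 adja⟩ with hea
  set eb : ↥G.edgeSet := ⟨s(a0, a3), G.mem_edgeSet.2 adjb⟩ with heb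
  set ec : ↥G.edgeSet := ⟨s(a2, a1), G.mem_edgeSet.2 adjc⟩ with hec
  set ed : ↥G.edgeSet := ⟨s(a2, a3), G.mem_edgeSet.2 adjd⟩ with hed
  have edge_ne : ∀ (u v x y : ZMod (2 ^ n)) (hu : s(u, v) ∈ G.edgeSet)
      (hx : s(x, y) ∈ G.edgeSet), (u ≠ x ∨ v ≠ y) → (u ≠ y ∨ v ≠ x) →
      (⟨s(u, v), hu⟩ : ↥G.edgeSet) ≠ ⟨s(x, y), hx⟩ := by
    intro u v x y hu hx h1 h2 h
    have h' : s(u, v) = s(x, y) := congrArg Subtype.val h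
    rw [Sym2.eq_iff] at h'
    rcases h' with ⟨e1, e2⟩ | ⟨e1, e2⟩
    · rcases h1 with h1 | h1
      · exact h1 e1
      · exact h1 e2
    · rcases h2 with h2 | h2
      · exact h2 e1
      · exact h2 e2
  have hab : ea ≠ eb := edge_ne _ _ _ _ _ _ (Or.inr h13) (Or.inl h03)
  have hac : ea ≠ ec := edge_ne _ _ _ _ _ _ (Or.inl h02) (Or.inl h01)
  have had : ea ≠ ed := edge_ne _ _ _ _ _ _ (Or.inl h02) (Or.inl h03)
  have hbc : eb ≠ ec := edge_ne _ _ _ _ _ _ (Or.inl h02) (Or.inl h01)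
  have hbd : eb ≠ ed := edge_ne _ _ _ _ _ _ (Or.inl h02) (Or.inl h03)
  have hcd : ec ≠ ed := edge_ne _ _ _ _ _ _ (Or.inr h13) (Or.inl h23)
  refine ⟨fun e => if e = ea then (1 : ZMod q) else if e = eb then -1 else
    if e = ec then -1 else if e = ed then 1 else 0, ?_, ?_, ?_⟩
  · -- membership in the dual code
    rw [mem_graphCode_dual_iff]
    intro v
    have hzero : ∀ e ∈ Finset.univ, e ∉ ({ea, eb, ec, ed} : Finset ↥G.edgeSet) →
        (if e = ea then (1 : ZMod q) else if e = eb then -1 else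
          if e = ec then -1 else if e = ed then 1 else 0) * G.incMatrix (ZMod q) v ↑e = 0 := by
      intro e _ he
      simp only [Finset.mem_insert, Finset.mem_singleton, not_or] at he
      obtain ⟨k1, k2, k3, k4⟩ := he
      rw [if_neg k1, if_neg k2, if_neg k3, if_neg k4, zero_mul]
    rw [← Finset.sum_subset (Finset.subset_univ ({ea, eb, ec, ed} : Finset ↥G.edgeSet)) hzero]
    rw [Finset.sum_insert (by simp [hab, hac, had]),
      Finset.sum_insert (by simp [hbc, hbd]),
      Finset.sum_insert (by simp [hcd]), Finset.sum_singleton]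
    rw [if_pos rfl, if_neg (Ne.symm hab), if_pos rfl, if_neg (Ne.symm hac),
      if_neg (Ne.symm hbc), if_pos rfl, if_neg (Ne.symm had), if_neg (Ne.symm hbd),
      if_neg (Ne.symm hcd), if_pos rfl]
    have hia : G.incMatrix (ZMod q) v ↑ea = if v = a0 ∨ v = a1 then 1 else 0 := by
      rw [incMatrix_edge_eq]
      congr 1
      simp [hea, Sym2.mem_iff]
    have hib : G.incMatrix (ZMod q) v ↑eb = if v = a0 ∨ v = a3 then 1 else 0 := by
      rw [incMatrix_edge_eq]
      congr 1
      simp [heb, Sym2.mem_iff]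
    have hic : G.incMatrix (ZMod q) v ↑ec = if v = a2 ∨ v = a1 then 1 else 0 := by
      rw [incMatrix_edge_eq]
      congr 1
      simp [hec, Sym2.mem_iff]
    have hid : G.incMatrix (ZMod q) v ↑ed = if v = a2 ∨ v = a3 then 1 else 0 := by
      rw [incMatrix_edge_eq]
      congr 1
      simp [hed, Sym2.mem_iff]
    rw [hia, hib, hic, hid]
    by_cases hv0 : v = a0
    · have c1 : v = a0 ∨ v = a1 := Or.inl hv0
      have c2 : v = a0 ∨ v = a3 := Or.inl hv0
      have c3 : ¬(v = a2 ∨ v = a1) := by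
        rw [hv0]; push_neg; exact ⟨h02, h01⟩
      have c4 : ¬(v = a2 ∨ v = a3) := by
        rw [hv0]; push_neg; exact ⟨h02, h03⟩
      rw [if_pos c1, if_pos c2, if_neg c3, if_neg c4]
      ring
    · by_cases hv1 : v = a1
      · have c1 : v = a0 ∨ v = a1 := Or.inr hv1
        have c2 : ¬(v = a0 ∨ v = a3) := by
          rw [hv1]; push_neg; exact ⟨fun h => h01 h.symm, h13⟩
        have c3 : v = a2 ∨ v = a1 := Or.inr hv1
        have c4 : ¬(v = a2 ∨ v = a3) := by
          rw [hv1]; push_neg; exact ⟨h12, h13⟩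
        rw [if_pos c1, if_neg c2, if_pos c3, if_neg c4]
        ring
      · by_cases hv2 : v = a2
        · have c1 : ¬(v = a0 ∨ v = a1) := by push_neg; exact ⟨hv0, hv1⟩
          have c2 : ¬(v = a0 ∨ v = a3) := by
            rw [hv2]; push_neg; exact ⟨fun h => h02 h.symm, h23⟩
          have c3 : v = a2 ∨ v = a1 := Or.inl hv2
          have c4 : v = a2 ∨ v = a3 := Or.inl hv2
          rw [if_neg c1, if_neg c2, if_pos c3, if_pos c4]
          ring
        · by_cases hv3 : v = a3
          · have c1 : ¬(v = a0 ∨ v = a1) := by push_neg; exact ⟨hv0, hv1⟩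
            have c2 : v = a0 ∨ v = a3 := Or.inr hv3
            have c3 : ¬(v = a2 ∨ v = a1) := by push_neg; exact ⟨hv2, hv1⟩
            have c4 : v = a2 ∨ v = a3 := Or.inr hv3
            rw [if_neg c1, if_pos c2, if_neg c3, if_pos c4]
            ring
          · have c1 : ¬(v = a0 ∨ v = a1) := by push_neg; exact ⟨hv0, hv1⟩
            have c2 : ¬(v = a0 ∨ v = a3) := by push_neg; exact ⟨hv0, hv3⟩
            have c3 : ¬(v = a2 ∨ v = a1) := by push_neg; exact ⟨hv2, hv1⟩
            have c4 : ¬(v = a2 ∨ v = a3) := by push_neg; exact ⟨hv2, hv3⟩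
            rw [if_neg c1, if_neg c2, if_neg c3, if_neg c4]
            ring
  · -- nonzero
    intro h
    have := congrFun h ea
    rw [if_pos rfl, Pi.zero_apply] at this
    exact one_ne_zero this
  · -- support has exactly four elements
    have hsupp : {e : ↥G.edgeSet | (if e = ea then (1 : ZMod q) else if e = eb then -1 else
        if e = ec then -1 else if e = ed then 1 else 0) ≠ 0} = {ea, eb, ec, ed} := by
      ext e
      simp only [Set.mem_setOf_eq, Set.mem_insert_iff, Set.mem_singleton_iff]
      have sab := Ne.symm hab
      have sac := Ne.symm hac
      have sad := Ne.symm had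
      have sbc := Ne.symm hbc
      have sbd := Ne.symm hbd
      have scd := Ne.symm hcd
      by_cases k1 : e = ea
      · simp [k1]
      · by_cases k2 : e = eb
        · simp [k1, k2, sab]
        · by_cases k3 : e = ec
          · simp [k1, k2, k3, sac, sbc]
          · by_cases k4 : e = ed
            · simp [k1, k2, k3, k4, sad, sbd, scd]
            · simp [k1, k2, k3, k4]
    rw [show {e : ↥G.edgeSet | (fun e => if e = ea then (1 : ZMod q) else if e = eb then -1 else
        if e = ec then -1 else if e = ed then 1 else 0) e ≠ 0} = ({ea, eb, ec, ed} :
        Set ↥G.edgeSet) from hsupp]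
    rw [Set.ncard_insert_of_notMem (by simp [hab, hac, had]) (Set.toFinite _),
      Set.ncard_insert_of_notMem (by simp [hbc, hbd]) (Set.toFinite _),
      Set.ncard_pair hcd]

end Construction

theorem unitGraph_twoPow_dualCode (n q : ℕ) (hn : 2 ≤ n) [Fact q.Prime] (hq : Odd q) :
    Nat.card ↥(unitGraph (2 ^ n)).edgeSet = 2 ^ (2 * (n - 1)) ∧
    Module.finrank (ZMod q) ↥(dualCode (graphCode (ZMod q) (unitGraph (2 ^ n)))) =
      2 ^ n * (2 ^ (n - 2) - 1) + 1 ∧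
    (∀ w ∈ dualCode (graphCode (ZMod q) (unitGraph (2 ^ n))), w ≠ 0 →
      4 ≤ {e | w e ≠ 0}.ncard) ∧
    (∃ w ∈ dualCode (graphCode (ZMod q) (unitGraph (2 ^ n))),
      w ≠ 0 ∧ {e | w e ≠ 0}.ncard = 4) := by
  classical
  have hn0 : n ≠ 0 := by omega
  refine ⟨card_edges hn0, ?_, fun w hw hw0 => dist_lower n q hn0 hw hw0,
    exists_weight_four n q hn⟩
  have hsum := finrank_add_finrank_dualCode (graphCode (ZMod q) (unitGraph (2 ^ n)))
  have hC := finrank_graphCode n q hn0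
  have hE : Fintype.card ↥(unitGraph (2 ^ n)).edgeSet = 2 ^ (2 * (n - 1)) := by
    rw [← Nat.card_eq_fintype_card]
    exact card_edges hn0
  obtain ⟨b, hb⟩ : ∃ b, 2 ^ (n - 2) = b + 1 :=
    ⟨2 ^ (n - 2) - 1, by have := Nat.one_le_two_pow (n := n - 2); omega⟩
  have h2n : 2 ^ n = 4 * (b + 1) := by
    rw [show n = (n - 2) + 2 by omega, pow_add, hb]; ring
  have h2e : 2 ^ (2 * (n - 1)) = 4 * (b * b) + 8 * b + 4 := by
    rw [show 2 * (n - 1) = (n - 2) + (n - 2) + 2 by omega, pow_add, pow_add, hb]; ring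
  rw [hC, hE, h2e] at hsum
  have hsub : 2 ^ n - 1 = 4 * b + 3 := by omega
  rw [hsub] at hsum
  have hrhs : 2 ^ n * (2 ^ (n - 2) - 1) + 1 = 4 * (b * b) + 4 * b + 1 := by
    rw [h2n, hb, Nat.add_sub_cancel]; ring
  rw [hrhs]
  linarith
end

section
/- Let p₁ and p₂ be distinct odd primes and n₁, n₂ positive integers, and set n = p₁^{n₁}·p₂^{n₂}. Then the unit graph G(Z_n) is connected and its diameter is at most 2; that is, any two distinct vertices of G(Z_n) are joined by a path of length at most 2. -/
def HasCommonUnitShift (R : Type*) [Ring R] : Prop :=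
  ∀ a b : R, ∃ z, IsUnit (a + z) ∧ IsUnit (b + z)

theorem IsLocalRing.hasCommonUnitShift {R : Type*} [CommRing R] [IsLocalRing R]
    (h2 : IsUnit (2 : R)) : HasCommonUnitShift R := by
  intro a b
  by_contra! h
  have hplus : ¬IsUnit (b - a + 1) := by
    simpa [show a + (1 - a) = 1 by ring, show b + (1 - a) = b - a + 1 by ring] using h (1 - a)
  have hminus : ¬IsUnit (b - a - 1) := by
    simpa [show a + (-1 - a) = -1 by ring, show b + (-1 - a) = b - a - 1 by ring] using h (-1 - a)
  have : ¬IsUnit ((b - a + 1) + -(b - a - 1)) :=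
    nonunits_add hplus (by rwa [mem_nonunits_iff, IsUnit.neg_iff])
  exact this (by convert h2 using 1; ring)

theorem HasCommonUnitShift.prod {R S : Type*} [Ring R] [Ring S]
    (hR : HasCommonUnitShift R) (hS : HasCommonUnitShift S) : HasCommonUnitShift (R × S) := by
  rintro ⟨a₁, a₂⟩ ⟨b₁, b₂⟩
  obtain ⟨z₁, ha₁, hb₁⟩ := hR a₁ b₁
  obtain ⟨z₂, ha₂, hb₂⟩ := hS a₂ b₂
  exact ⟨(z₁, z₂), Prod.isUnit_iff.2 ⟨ha₁, ha₂⟩, Prod.isUnit_iff.2 ⟨hb₁, hb₂⟩⟩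

theorem HasCommonUnitShift.of_ringEquiv {R S : Type*} [Ring R] [Ring S] (e : R ≃+* S)
    (hS : HasCommonUnitShift S) : HasCommonUnitShift R := by
  intro a b
  obtain ⟨z, ha, hb⟩ := hS (e a) (e b)
  refine ⟨e.symm z, ?_, ?_⟩
  · simpa using ha.map e.symm
  · simpa using hb.map e.symm

theorem ZMod.isLocalRing_prime_pow {p k : ℕ} (hp : p.Prime) (hk : 0 < k) :
    IsLocalRing (ZMod (p ^ k)) := by
  have : Fact (1 < p ^ k) := ⟨Nat.one_lt_pow hk.ne' hp.one_lt⟩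
  refine IsLocalRing.of_nonunits_add fun a b ha hb => ?_
  have hmem (n : ℕ) : (n : ZMod (p ^ k)) ∈ nonunits _ ↔ p ∣ n := by
    rw [mem_nonunits_iff, ZMod.isUnit_natCast_iff_not_dvd_pow hp hk, not_not]
  rw [← ZMod.natCast_zmod_val a, hmem] at ha
  rw [← ZMod.natCast_zmod_val b, hmem] at hb
  rw [← ZMod.natCast_zmod_val a, ← ZMod.natCast_zmod_val b, ← Nat.cast_add, hmem]
  exact dvd_add ha hb

theorem ZMod.hasCommonUnitShift_prime_pow {p k : ℕ} (hp : p.Prime) (hodd : Odd p) (hk : 0 < k) :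
    HasCommonUnitShift (ZMod (p ^ k)) := by
  have := ZMod.isLocalRing_prime_pow hp hk
  refine IsLocalRing.hasCommonUnitShift ?_
  have h2 : ¬p ∣ 2 := fun h =>
    Nat.not_even_iff_odd.2 hodd ((Nat.prime_dvd_prime_iff_eq hp Nat.prime_two).1 h ▸ even_two)
  exact_mod_cast (ZMod.isUnit_natCast_iff_not_dvd_pow hp hk).2 h2

theorem unitGraph.exists_walk_length_le_two {m : ℕ} (h : HasCommonUnitShift (ZMod m))
    {x y : ZMod m} (hxy : x ≠ y) : ∃ w : (unitGraph m).Walk x y, w.length ≤ 2 := by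
  by_cases hu : IsUnit (x + y)
  · have hadj : (unitGraph m).Adj x y := ⟨hxy, hu⟩
    exact ⟨hadj.toWalk, by simp⟩
  obtain ⟨z, hux, huy⟩ := h x y
  have hxz : x ≠ z := by rintro rfl; exact hu (by rwa [add_comm] at huy)
  have hzy : z ≠ y := by rintro rfl; exact hu hux
  have hadj₁ : (unitGraph m).Adj x z := ⟨hxz, hux⟩
  have hadj₂ : (unitGraph m).Adj z y := ⟨hzy, by rwa [add_comm] at huy⟩
  exact ⟨hadj₁.toWalk.append hadj₂.toWalk, by simp⟩

theorem unitGraph.connected_of_hasCommonUnitShift {m : ℕ} (h : HasCommonUnitShift (ZMod m)) :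
    (unitGraph m).Connected := by
  refine (SimpleGraph.connected_iff _).2 ⟨fun x y => ?_, ⟨0⟩⟩
  obtain rfl | hxy := eq_or_ne x y
  · rfl
  · obtain ⟨w, -⟩ := exists_walk_length_le_two h hxy
    exact ⟨w⟩

theorem unitGraph.dist_le_two_of_hasCommonUnitShift {m : ℕ} (h : HasCommonUnitShift (ZMod m))
    {x y : ZMod m} (hxy : x ≠ y) : (unitGraph m).dist x y ≤ 2 :=
  let ⟨w, hw⟩ := exists_walk_length_le_two h hxy
  (SimpleGraph.dist_le w).trans hw

theorem unitGraph_twoOddPrimes_connected_diam (p₁ p₂ n₁ n₂ : ℕ)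
    (hp₁ : p₁.Prime) (hp₂ : p₂.Prime) (hodd₁ : Odd p₁) (hodd₂ : Odd p₂)
    (hne : p₁ ≠ p₂) (hn₁ : 0 < n₁) (hn₂ : 0 < n₂) :
    (unitGraph (p₁ ^ n₁ * p₂ ^ n₂)).Connected ∧
    ∀ x y : ZMod (p₁ ^ n₁ * p₂ ^ n₂), x ≠ y →
      (unitGraph (p₁ ^ n₁ * p₂ ^ n₂)).dist x y ≤ 2 := by
  have hcop : (p₁ ^ n₁).Coprime (p₂ ^ n₂) :=
    Nat.Coprime.pow _ _ ((Nat.coprime_primes hp₁ hp₂).2 hne)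
  have h : HasCommonUnitShift (ZMod (p₁ ^ n₁ * p₂ ^ n₂)) :=
    .of_ringEquiv (ZMod.chineseRemainder hcop)
      ((ZMod.hasCommonUnitShift_prime_pow hp₁ hodd₁ hn₁).prod
        (ZMod.hasCommonUnitShift_prime_pow hp₂ hodd₂ hn₂))
  exact ⟨unitGraph.connected_of_hasCommonUnitShift h,
    fun _ _ => unitGraph.dist_le_two_of_hasCommonUnitShift h⟩
end

section
/- Let p₁ and p₂ be distinct odd primes and n₁, n₂ positive integers, and set n = p₁^{n₁}·p₂^{n₂}. Then the girth of the unit graph G(Z_n) equals 3. -/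
namespace SimpleGraph

variable {α : Type*} {G : SimpleGraph α}

lemma egirth_eq_three_of_not_cliqueFree (h : ¬G.CliqueFree 3) : G.egirth = 3 :=
  le_antisymm
    (((not_cliqueFree_iff_top_isContained 3).mp h).egirth_le.trans_eq (egirth_top (by simp)))
    G.three_le_egirth

lemma girth_eq_three_of_not_cliqueFree (h : ¬G.CliqueFree 3) : G.girth = 3 := by
  simp [girth, egirth_eq_three_of_not_cliqueFree h]

end SimpleGraph

lemma unitGraph_not_cliqueFree_three {m : ℕ} (hm : Odd m) (h3 : 3 < m) :
    ¬(unitGraph m).CliqueFree 3 := by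
  have : Fact (1 < m) := ⟨by omega⟩
  have two_isUnit : IsUnit (2 : ZMod m) := by
    exact_mod_cast (ZMod.isUnit_iff_coprime 2 m).mpr (Nat.coprime_two_left.mpr hm)
  have three_ne_zero : (3 : ZMod m) ≠ 0 := by
    rw [← Nat.cast_ofNat, Ne, ZMod.natCast_eq_zero_iff]
    exact fun hdvd => absurd (Nat.le_of_dvd three_pos hdvd) (by omega)
  refine SimpleGraph.IsNClique.not_cliqueFree (s := {0, 1, -2})
    (SimpleGraph.is3Clique_triple_iff.mpr ⟨⟨zero_ne_one, ?_⟩, ⟨?_, ?_⟩, ⟨?_, ?_⟩⟩)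
  · simp
  · simpa [eq_comm] using two_isUnit.ne_zero
  · simpa using two_isUnit.neg
  · intro h
    exact three_ne_zero (by linear_combination h)
  · norm_num

lemma Nat.Prime.three_le_pow_of_odd {p n : ℕ} (hp : p.Prime) (hodd : Odd p) (hn : n ≠ 0) :
    3 ≤ p ^ n := by
  obtain ⟨k, rfl⟩ := hodd
  have := hp.two_le
  exact le_trans (by omega) (Nat.le_self_pow hn _)

theorem unitGraph_twoOddPrimes_girth_general (p₁ p₂ n₁ n₂ : ℕ)
    (hp₁ : p₁.Prime) (hp₂ : p₂.Prime) (hodd₁ : Odd p₁) (hodd₂ : Odd p₂)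
    (hn₁ : 0 < n₁) (hn₂ : 0 < n₂) :
    (unitGraph (p₁ ^ n₁ * p₂ ^ n₂)).girth = 3 := by
  refine SimpleGraph.girth_eq_three_of_not_cliqueFree (unitGraph_not_cliqueFree_three
    (hodd₁.pow.mul hodd₂.pow) ?_)
  nlinarith [hp₁.three_le_pow_of_odd hodd₁ hn₁.ne', hp₂.three_le_pow_of_odd hodd₂ hn₂.ne']

theorem unitGraph_twoOddPrimes_girth (p₁ p₂ n₁ n₂ : ℕ)
    (hp₁ : p₁.Prime) (hp₂ : p₂.Prime) (hodd₁ : Odd p₁) (hodd₂ : Odd p₂)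
    (hne : p₁ ≠ p₂) (hn₁ : 0 < n₁) (hn₂ : 0 < n₂) :
    (unitGraph (p₁ ^ n₁ * p₂ ^ n₂)).girth = 3 :=
  unitGraph_twoOddPrimes_girth_general p₁ p₂ n₁ n₂ hp₁ hp₂ hodd₁ hodd₂ hn₁ hn₂
end

section
/- Let p be an odd prime and m, n₁ positive integers, and set n = 2^m·p^{n₁}. Then the unit graph G(Z_n) is connected and its diameter is at most 3; that is, any two distinct vertices of G(Z_n) are joined by a path of length at most 3. -/
/-!
Let `n = 2 ^ m * p ^ k`. As `n` is even, `2` is not a unit of `ZMod n`, so `x + x` never is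
and adjacency is simply "`x + y` is a unit", i.e. `x + y` is odd and prime to `p`. Two vertices
of the same parity have a common neighbour: by the Chinese remainder theorem pick `s` of the
other parity with `s ≢ -x, -y (mod p)`, which is possible as `p ≥ 3`. A vertex `x` is adjacent
to `1 - x`, which has the parity of any `y` of the other parity than `x`, so every distance is
at most `3`.
-/

open SimpleGraph ZMod

theorem ZMod.exists_castHom_eq_castHom_eq {n a b : ℕ} (hab : a.Coprime b) (ha : a ∣ n)
    (hb : b ∣ n) (u : ZMod a) (v : ZMod b) :
    ∃ s : ZMod n, castHom ha (ZMod a) s = u ∧ castHom hb (ZMod b) s = v := by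
  let φ : ZMod n →+* ZMod a × ZMod b :=
    (chineseRemainder hab : ZMod (a * b) →+* ZMod a × ZMod b).comp
      (castHom (hab.mul_dvd_of_dvd_of_dvd ha hb) _)
  obtain ⟨s, hφ⟩ : ∃ s, φ s = (u, v) :=
    (chineseRemainder hab).surjective.comp (castHom_surjective _) (u, v)
  refine ⟨s, ?_, ?_⟩
  · rw [Subsingleton.elim (castHom ha (ZMod a)) ((RingHom.fst _ _).comp φ)]
    simp [hφ]
  · rw [Subsingleton.elim (castHom hb (ZMod b)) ((RingHom.snd _ _).comp φ)]
    simp [hφ]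

theorem ZMod.coprime_val_of_castHom_ne_zero {n q : ℕ} [NeZero n] (hq : q.Prime) (hqn : q ∣ n)
    {z : ZMod n} (hz : castHom hqn (ZMod q) z ≠ 0) : z.val.Coprime q := by
  rw [castHom_apply, ← natCast_val, Ne, natCast_eq_zero_iff] at hz
  exact ((hq.coprime_iff_not_dvd).mpr hz).symm

theorem unitGraph_adj_iff_of_two_dvd {n : ℕ} (h2 : 2 ∣ n) {x y : ZMod n} :
    (unitGraph n).Adj x y ↔ IsUnit (x + y) := by
  refine ⟨And.right, fun h => ⟨?_, h⟩⟩
  rintro rfl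
  have h2x := h.map (castHom h2 (ZMod 2))
  rw [map_add, ← two_mul, show (2 : ZMod 2) = 0 from rfl, zero_mul] at h2x
  exact not_isUnit_zero h2x

section TwoPowMulPrimePow

variable {p m k : ℕ}

theorem isUnit_of_castHom_two_ne_zero_of_castHom_ne_zero (h2 : 2 ∣ 2 ^ m * p ^ k)
    (hpn : p ∣ 2 ^ m * p ^ k) (hp : p.Prime)
    {z : ZMod (2 ^ m * p ^ k)} (hz2 : castHom h2 (ZMod 2) z ≠ 0)
    (hzp : castHom hpn (ZMod p) z ≠ 0) : IsUnit z := by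
  have : NeZero (2 ^ m * p ^ k) := ⟨by have := hp.pos; positivity⟩
  rw [← natCast_zmod_val z, isUnit_iff_coprime]
  exact ((coprime_val_of_castHom_ne_zero Nat.prime_two h2 hz2).pow_right m).mul_right
    ((coprime_val_of_castHom_ne_zero hp hpn hzp).pow_right k)

theorem unitGraph_exists_adj_adj_of_castHom_two_eq (h2 : 2 ∣ 2 ^ m * p ^ k)
    (hpn : p ∣ 2 ^ m * p ^ k) (hp : p.Prime) (hodd : Odd p)
    {x y : ZMod (2 ^ m * p ^ k)} (hxy : castHom h2 (ZMod 2) x = castHom h2 (ZMod 2) y) :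
    ∃ s, (unitGraph _).Adj x s ∧ (unitGraph _).Adj s y := by
  set f := castHom h2 (ZMod 2)
  set g := castHom hpn (ZMod p)
  have : NeZero p := ⟨hp.ne_zero⟩
  obtain ⟨c, hcx, hcy⟩ : ∃ c : ZMod p, c ≠ -g x ∧ c ≠ -g y :=
    ENat.exists_ne_ne_of_three_le
      (by simpa [ENat.card_eq_coe_natCard] using hp.odd_iff.mp hodd) _ _
  obtain ⟨s, hfs, hgs⟩ :=
    exists_castHom_eq_castHom_eq (Nat.coprime_two_left.mpr hodd) h2 hpn (1 - f x) c
  have adj_s : ∀ z, f z = f x → c ≠ -g z → (unitGraph _).Adj z s := by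
    intro z hfz hc
    rw [unitGraph_adj_iff_of_two_dvd h2]
    refine isUnit_of_castHom_two_ne_zero_of_castHom_ne_zero h2 hpn hp ?_ ?_
    · rw [map_add, hfs, hfz, add_sub_cancel]
      exact one_ne_zero
    · rw [map_add, hgs]
      exact fun h => hc (eq_neg_of_add_eq_zero_right h)
  exact ⟨s, adj_s x rfl hcx, (adj_s y hxy.symm hcy).symm⟩

theorem unitGraph_exists_walk_length_le_three (h2 : 2 ∣ 2 ^ m * p ^ k)
    (hpn : p ∣ 2 ^ m * p ^ k) (hp : p.Prime) (hodd : Odd p)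
    (x y : ZMod (2 ^ m * p ^ k)) : ∃ w : (unitGraph _).Walk x y, w.length ≤ 3 := by
  by_cases hxy : castHom h2 (ZMod 2) x = castHom h2 (ZMod 2) y
  · obtain ⟨s, hxs, hsy⟩ := unitGraph_exists_adj_adj_of_castHom_two_eq h2 hpn hp hodd hxy
    exact ⟨(Walk.nil.cons hsy).cons hxs, by simp⟩
  · have hx : (unitGraph _).Adj x (1 - x) := by
      rw [unitGraph_adj_iff_of_two_dvd h2, add_sub_cancel]
      exact isUnit_one
    have hy : castHom h2 (ZMod 2) (1 - x) = castHom h2 (ZMod 2) y := by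
      rw [map_sub, map_one]
      exact (by decide : ∀ a b : ZMod 2, a ≠ b → 1 - a = b) _ _ hxy
    obtain ⟨t, hst, hty⟩ := unitGraph_exists_adj_adj_of_castHom_two_eq h2 hpn hp hodd hy
    exact ⟨((Walk.nil.cons hty).cons hst).cons hx, by simp⟩

end TwoPowMulPrimePow

theorem unitGraph_twoPowTimesOddPrimePow_connected_diam (p m n₁ : ℕ)
    (hp : p.Prime) (hodd : Odd p) (hm : 0 < m) (hn₁ : 0 < n₁) :
    (unitGraph (2 ^ m * p ^ n₁)).Connected ∧
    ∀ x y : ZMod (2 ^ m * p ^ n₁), x ≠ y →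
      (unitGraph (2 ^ m * p ^ n₁)).dist x y ≤ 3 := by
  have hwalk := unitGraph_exists_walk_length_le_three
    ((dvd_pow_self 2 hm.ne').mul_right _) ((dvd_pow_self p hn₁.ne').mul_left _) hp hodd
  refine ⟨.mk fun x y => ?_, fun x y _ => ?_⟩ <;> obtain ⟨w, hw⟩ := hwalk x y
  · exact w.reachable
  · exact (dist_le w).trans hw
end

section
/- Let p₁, p₂, p₃ be distinct odd primes and n₁, n₂, n₃ positive integers, and set n = p₁^{n₁}·p₂^{n₂}·p₃^{n₃}. Then the unit graph G(Z_n) is connected and its diameter is at most 2; that is, any two distinct vertices of G(Z_n) are joined by a path of length at most 2. -/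
/-! An element of `ZMod n` is a unit iff it is nonzero modulo every prime `p ∣ n`. For `p ≥ 3`
there is a residue mod `p` avoiding both `-x` and `-y`, and by the Chinese remainder theorem these
residues glue to some `z` with `x + z` and `y + z` units. Unless `x` and `y` are already adjacent,
such a `z` is a common neighbour of them. -/

def HasCommonUnitTranslates (R : Type*) [Semiring R] : Prop :=
  ∀ x y : R, ∃ z, IsUnit (x + z) ∧ IsUnit (y + z)

namespace HasCommonUnitTranslates

variable {R S : Type*} [Semiring R] [Semiring S]

theorem prod (hR : HasCommonUnitTranslates R) (hS : HasCommonUnitTranslates S) :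
    HasCommonUnitTranslates (R × S) := by
  intro x y
  obtain ⟨z₁, hx₁, hy₁⟩ := hR x.1 y.1
  obtain ⟨z₂, hx₂, hy₂⟩ := hS x.2 y.2
  exact ⟨(z₁, z₂), Prod.isUnit_iff.2 ⟨hx₁, hx₂⟩, Prod.isUnit_iff.2 ⟨hy₁, hy₂⟩⟩

theorem of_ringEquiv (e : R ≃+* S) (hR : HasCommonUnitTranslates R) :
    HasCommonUnitTranslates S := by
  intro x y
  obtain ⟨z, hx, hy⟩ := hR (e.symm x) (e.symm y)
  exact ⟨e z, by simpa using hx.map e, by simpa using hy.map e⟩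

theorem zmod_mul {a b : ℕ} (hab : a.Coprime b) (ha : HasCommonUnitTranslates (ZMod a))
    (hb : HasCommonUnitTranslates (ZMod b)) : HasCommonUnitTranslates (ZMod (a * b)) :=
  (ha.prod hb).of_ringEquiv (ZMod.chineseRemainder hab).symm

end HasCommonUnitTranslates

theorem Fintype.exists_ne_and_ne_of_two_lt_card {α : Type*} [Fintype α]
    (h : 2 < Fintype.card α) (a b : α) : ∃ c, c ≠ a ∧ c ≠ b := by
  classical
  obtain ⟨c, -, hc⟩ := Finset.exists_mem_notMem_of_card_lt_card
    (Finset.card_le_two.trans_lt h : ({a, b} : Finset α).card < Finset.univ.card)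
  exact ⟨c, by simpa [not_or] using hc⟩

theorem ZMod.isUnit_iff_castHom_ne_zero {p k : ℕ} (hp : p.Prime) (hk : 0 < k)
    (a : ZMod (p ^ k)) : IsUnit a ↔ ZMod.castHom (dvd_pow_self p hk.ne') (ZMod p) a ≠ 0 := by
  have : NeZero (p ^ k) := ⟨pow_ne_zero k hp.ne_zero⟩
  rw [← ZMod.natCast_zmod_val a, map_natCast, ZMod.isUnit_natCast_iff_not_dvd_pow hp hk, Ne,
    ZMod.natCast_eq_zero_iff]

theorem hasCommonUnitTranslates_zmod_prime_pow {p k : ℕ} (hp : p.Prime) (hodd : Odd p)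
    (hk : 0 < k) : HasCommonUnitTranslates (ZMod (p ^ k)) := by
  intro x y
  set f := ZMod.castHom (dvd_pow_self p hk.ne') (ZMod p)
  have : NeZero p := ⟨hp.ne_zero⟩
  have hcard : 2 < Fintype.card (ZMod p) := by
    have := Nat.odd_iff.mp hodd
    have := hp.two_le
    rw [ZMod.card]
    omega
  obtain ⟨c, hcx, hcy⟩ := Fintype.exists_ne_and_ne_of_two_lt_card hcard (-f x) (-f y)
  obtain ⟨z, rfl⟩ := ZMod.ringHom_surjective f c
  refine ⟨z, ?_, ?_⟩ <;> rw [ZMod.isUnit_iff_castHom_ne_zero hp hk, map_add]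
  · contrapose! hcx
    linear_combination hcx
  · contrapose! hcy
    linear_combination hcy

theorem hasCommonUnitTranslates_zmod_of_odd {n : ℕ} (hn : Odd n) :
    HasCommonUnitTranslates (ZMod n) := by
  induction n using Nat.recOnPosPrimePosCoprime with
  | prime_pow p k hp hk =>
    exact hasCommonUnitTranslates_zmod_prime_pow hp ((Nat.odd_pow_iff hk.ne').mp hn) hk
  | zero => exact absurd hn Nat.not_odd_zero
  | one => exact fun _ _ ↦ ⟨0, isUnit_of_subsingleton _, isUnit_of_subsingleton _⟩
  | coprime a b _ _ hab ha hb =>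
    exact .zmod_mul hab (ha (Nat.Odd.of_mul_left hn)) (hb (Nat.Odd.of_mul_right hn))

theorem unitGraph_exists_walk_length_le_two {m : ℕ} (h : HasCommonUnitTranslates (ZMod m))
    {x y : ZMod m} (hxy : x ≠ y) : ∃ w : (unitGraph m).Walk x y, w.length ≤ 2 := by
  by_cases hadj : (unitGraph m).Adj x y
  · exact ⟨hadj.toWalk, by simp⟩
  obtain ⟨z, hxz, hyz⟩ := h x y
  have hx : (unitGraph m).Adj x z := ⟨by rintro rfl; exact hadj ⟨hxy, by rwa [add_comm]⟩, hxz⟩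
  have hy : (unitGraph m).Adj z y := ⟨by rintro rfl; exact hadj ⟨hxy, hxz⟩, by rwa [add_comm]⟩
  exact ⟨.cons hx hy.toWalk, by simp⟩

theorem unitGraph_connected_and_dist_le_two {m : ℕ} (h : HasCommonUnitTranslates (ZMod m)) :
    (unitGraph m).Connected ∧ ∀ x y : ZMod m, x ≠ y → (unitGraph m).dist x y ≤ 2 := by
  refine ⟨.mk fun x y ↦ ?_, fun x y hxy ↦ ?_⟩
  · obtain rfl | hxy := eq_or_ne x y
    · rfl
    · obtain ⟨w, -⟩ := unitGraph_exists_walk_length_le_two h hxy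
      exact ⟨w⟩
  · obtain ⟨w, hw⟩ := unitGraph_exists_walk_length_le_two h hxy
    exact (SimpleGraph.dist_le w).trans hw

theorem unitGraph_threeOddPrimes_connected_diam_general (p₁ p₂ p₃ n₁ n₂ n₃ : ℕ)
    (hodd₁ : Odd p₁) (hodd₂ : Odd p₂) (hodd₃ : Odd p₃) :
    (unitGraph (p₁ ^ n₁ * p₂ ^ n₂ * p₃ ^ n₃)).Connected ∧
    ∀ x y : ZMod (p₁ ^ n₁ * p₂ ^ n₂ * p₃ ^ n₃), x ≠ y →
      (unitGraph (p₁ ^ n₁ * p₂ ^ n₂ * p₃ ^ n₃)).dist x y ≤ 2 :=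
  unitGraph_connected_and_dist_le_two <| hasCommonUnitTranslates_zmod_of_odd <|
    (hodd₁.pow.mul hodd₂.pow).mul hodd₃.pow

theorem unitGraph_threeOddPrimes_connected_diam (p₁ p₂ p₃ n₁ n₂ n₃ : ℕ)
    (hp₁ : p₁.Prime) (hp₂ : p₂.Prime) (hp₃ : p₃.Prime)
    (hodd₁ : Odd p₁) (hodd₂ : Odd p₂) (hodd₃ : Odd p₃)
    (hne₁₂ : p₁ ≠ p₂) (hne₁₃ : p₁ ≠ p₃) (hne₂₃ : p₂ ≠ p₃)
    (hn₁ : 0 < n₁) (hn₂ : 0 < n₂) (hn₃ : 0 < n₃) :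
    (unitGraph (p₁ ^ n₁ * p₂ ^ n₂ * p₃ ^ n₃)).Connected ∧
    ∀ x y : ZMod (p₁ ^ n₁ * p₂ ^ n₂ * p₃ ^ n₃), x ≠ y →
      (unitGraph (p₁ ^ n₁ * p₂ ^ n₂ * p₃ ^ n₃)).dist x y ≤ 2 :=
  unitGraph_threeOddPrimes_connected_diam_general p₁ p₂ p₃ n₁ n₂ n₃ hodd₁ hodd₂ hodd₃
end
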